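/- arXiv:math/0507111 — 8 statements merged into one kernel-verified Lean document; each statement's English description precedes it below -/
import Mathlib

section
/- Let U ⊆ (-∞, 1) be open and let w : ℝ → ℝ be twice differentiable on U. Let V = { z/(z-1) : z ∈ U } (which is again a subset of (-∞,1), since t = z/(z-1) is an involution of (-∞,1)), and define η(t) = (1/(1-t))·w(t/(t-1)) for t ∈ V. Then w satisfies z(1-z)²·w''(z) + (1-3z)(1-z)·w'(z) + (z - 3/4)·w(z) = 0 for every z ∈ U if and only if η satisfies t(1-t)·η''(t) + (1-2t)·η'(t) - (1/4)·η(t) = 0 for every t ∈ V. -/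
open Set

private lemma aux_phi_lt_one {z : ℝ} (hz : z < 1) : z / (z - 1) < 1 := by
  have h1 : z - 1 < 0 := by linarith
  have h2 : z / (z - 1) = 1 + (z - 1)⁻¹ := by
    field_simp [h1.ne]
    ring
  have h3 : (z - 1)⁻¹ < 0 := inv_lt_zero.mpr h1
  linarith

private lemma aux_phi_phi {z : ℝ} (hz : z ≠ 1) : (z / (z - 1)) / (z / (z - 1) - 1) = z := by
  have h1 : z - 1 ≠ 0 := sub_ne_zero.mpr hz
  have h2 : z / (z - 1) - 1 = (z - 1)⁻¹ := by field_simp; ring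
  rw [h2]
  field_simp

private lemma aux_key_alg (z W0 W1 W2 : ℝ) (hz : z ≠ 1) :
    (z/(z-1)) * (1 - z/(z-1)) * (2*((1-z/(z-1))^3)⁻¹*W0 - 4*((1-z/(z-1))^4)⁻¹*W1
        + ((1-z/(z-1))^5)⁻¹*W2)
      + (1 - 2*(z/(z-1))) * (((1-z/(z-1))^2)⁻¹*W0 - ((1-z/(z-1))^3)⁻¹*W1)
      - (1/4) * ((1-z/(z-1))⁻¹*W0)
    = -(1-z) * (z*(1-z)^2*W2 + (1-3*z)*(1-z)*W1 + (z-3/4)*W0) := by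
  have h1 : z - 1 ≠ 0 := sub_ne_zero.mpr hz
  have h2 : 1 - z/(z-1) = (1-z)⁻¹ := by
    rw [eq_comm, inv_eq_iff_eq_inv]
    field_simp
    ring
  have h3 : (1:ℝ) - z ≠ 0 := by
    intro h; apply hz; linarith
  rw [h2]
  simp only [← inv_pow, inv_inv]
  field_simp
  ring

private lemma aux_phi_deriv {t : ℝ} (ht : t ≠ 1) :
    HasDerivAt (fun s : ℝ => s / (s - 1)) (-(((t-1)^2)⁻¹)) t := by
  have h1 : t - 1 ≠ 0 := sub_ne_zero.mpr ht
  have h := (hasDerivAt_id t).div ((hasDerivAt_id t).sub_const 1) h1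
  refine h.congr_deriv ?_
  simp only [id]
  field_simp
  ring

private lemma aux_hasDeriv_g (w : ℝ → ℝ) {t W1 : ℝ} (ht : t ≠ 1)
    (hw : HasDerivAt w W1 (t/(t-1))) :
    HasDerivAt (fun s => (1 - s)⁻¹ * w (s/(s-1)))
      (((1-t)^2)⁻¹ * w (t/(t-1)) - ((1-t)^3)⁻¹ * W1) t := by
  have h1 : t - 1 ≠ 0 := sub_ne_zero.mpr ht
  have h1' : (1:ℝ) - t ≠ 0 := by intro h; apply ht; linarith [h]
  have hφ := aux_phi_deriv ht
  have hcomp : HasDerivAt (fun s => w (s/(s-1))) (W1 * -(((t-1)^2)⁻¹)) t :=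
    HasDerivAt.comp t hw hφ
  have hinv : HasDerivAt (fun s : ℝ => (1 - s)⁻¹) (((1-t)^2)⁻¹) t := by
    have h := ((hasDerivAt_const t (1:ℝ)).sub (hasDerivAt_id t)).inv h1'
    refine h.congr_deriv ?_
    simp only [id, Pi.sub_apply, Pi.pow_apply]
    field_simp
    ring
  have := hinv.mul hcomp
  refine this.congr_deriv ?_
  field_simp
  ring

private lemma aux_hasDeriv_G1 (a b : ℝ → ℝ) {t A B : ℝ} (ht : t ≠ 1)
    (ha : HasDerivAt a A (t/(t-1))) (hb : HasDerivAt b B (t/(t-1))) :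
    HasDerivAt (fun s => ((1-s)^2)⁻¹ * a (s/(s-1)) - ((1-s)^3)⁻¹ * b (s/(s-1)))
      (2*((1-t)^3)⁻¹ * a (t/(t-1)) - ((1-t)^4)⁻¹ * A
        - 3*((1-t)^4)⁻¹ * b (t/(t-1)) + ((1-t)^5)⁻¹ * B) t := by
  have h1 : t - 1 ≠ 0 := sub_ne_zero.mpr ht
  have h1' : (1:ℝ) - t ≠ 0 := by intro h; apply ht; linarith [h]
  have hφ := aux_phi_deriv ht
  have hca : HasDerivAt (fun s => a (s/(s-1))) (A * -(((t-1)^2)⁻¹)) t :=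
    HasDerivAt.comp t ha hφ
  have hcb : HasDerivAt (fun s => b (s/(s-1))) (B * -(((t-1)^2)⁻¹)) t :=
    HasDerivAt.comp t hb hφ
  have hbase : HasDerivAt (fun s : ℝ => 1 - s) (-1 : ℝ) t := by
    have h := (hasDerivAt_const t (1:ℝ)).sub (hasDerivAt_id t)
    refine h.congr_deriv ?_; ring
  have hp2 : HasDerivAt (fun s : ℝ => ((1-s)^2)⁻¹) (2*((1-t)^3)⁻¹) t := by
    have h := (hbase.pow 2).inv (pow_ne_zero 2 h1')
    refine h.congr_deriv ?_
    simp only [id, Pi.sub_apply, Pi.pow_apply]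
    field_simp
    ring
  have hp3 : HasDerivAt (fun s : ℝ => ((1-s)^3)⁻¹) (3*((1-t)^4)⁻¹) t := by
    have h := (hbase.pow 3).inv (pow_ne_zero 3 h1')
    refine h.congr_deriv ?_
    simp only [id, Pi.sub_apply, Pi.pow_apply]
    field_simp
    ring
  have := (hp2.mul hca).sub (hp3.mul hcb)
  refine this.congr_deriv ?_
  field_simp
  ring

section MainProof

variable {U V : Set ℝ}

private lemma aux_V_eq (hU1 : U ⊆ Set.Iio 1) (hV : V = (fun z => z / (z - 1)) '' U) :
    V = Set.Iio 1 ∩ (fun t => t / (t - 1)) ⁻¹' U := by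
  ext t
  constructor
  · intro ht
    rw [hV] at ht
    obtain ⟨z, hz, rfl⟩ := ht
    refine ⟨aux_phi_lt_one (hU1 hz), ?_⟩
    simpa [Set.mem_preimage, aux_phi_phi (ne_of_lt (hU1 hz))] using hz
  · rintro ⟨ht1, ht2⟩
    rw [hV]
    exact ⟨t / (t - 1), ht2, aux_phi_phi (ne_of_lt ht1)⟩

end MainProof

/-- Under the substitution `t = z/(z-1)` (an involution of `(-∞,1)`)
and `η(t) = (1/(1-t)) · w(t/(t-1))`, the singly confluent Heun equation on `U`
is equivalent to the hypergeometric equation with parameters `(1/2, 1/2; 1)` on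
`V = (z ↦ z/(z-1)) '' U`. -/
theorem heun_to_hypergeometric (U : Set ℝ) (hU : IsOpen U) (hU1 : U ⊆ Set.Iio 1)
    (w : ℝ → ℝ) (hw : DifferentiableOn ℝ w U) (hw' : DifferentiableOn ℝ (deriv w) U)
    (V : Set ℝ) (hV : V = (fun z => z / (z - 1)) '' U)
    (η : ℝ → ℝ) (hη : ∀ t ∈ V, η t = (1 / (1 - t)) * w (t / (t - 1))) :
    (∀ z ∈ U, z * (1 - z) ^ 2 * deriv (deriv w) z
        + (1 - 3 * z) * (1 - z) * deriv w z + (z - 3 / 4) * w z = 0)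
      ↔ (∀ t ∈ V, t * (1 - t) * deriv (deriv η) t
        + (1 - 2 * t) * deriv η t - (1 / 4) * η t = 0) := by
  have hVeq := aux_V_eq hU1 hV
  have hVsub : V ⊆ Set.Iio 1 := by rw [hVeq]; exact Set.inter_subset_left
  have hmemU : ∀ t ∈ V, t / (t - 1) ∈ U := by
    intro t ht; rw [hVeq] at ht; exact ht.2
  have hVopen : IsOpen V := by
    rw [hVeq]
    apply ContinuousOn.isOpen_inter_preimage ?_ isOpen_Iio hU
    exact ContinuousOn.div continuousOn_id (continuousOn_id.sub continuousOn_const)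
      (fun x hx => sub_ne_zero.mpr (ne_of_lt hx))
  have hne1 : ∀ t ∈ V, t ≠ 1 := fun t ht => ne_of_lt (hVsub ht)
  have hwd : ∀ t ∈ V, HasDerivAt w (deriv w (t/(t-1))) (t/(t-1)) := by
    intro t ht
    exact ((hw _ (hmemU t ht)).differentiableAt (hU.mem_nhds (hmemU t ht))).hasDerivAt
  have hwd' : ∀ t ∈ V, HasDerivAt (deriv w) (deriv (deriv w) (t/(t-1))) (t/(t-1)) := by
    intro t ht
    exact ((hw' _ (hmemU t ht)).differentiableAt (hU.mem_nhds (hmemU t ht))).hasDerivAt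
  have hgη : ∀ t ∈ V, η t = (1 - t)⁻¹ * w (t/(t-1)) := by
    intro t ht; rw [hη t ht, one_div]
  have hd1 : ∀ t ∈ V, deriv η t
      = ((1-t)^2)⁻¹ * w (t/(t-1)) - ((1-t)^3)⁻¹ * deriv w (t/(t-1)) := by
    intro t ht
    have heq : η =ᶠ[nhds t] (fun s => (1 - s)⁻¹ * w (s/(s-1))) :=
      Filter.eventuallyEq_of_mem (hVopen.mem_nhds ht) (fun s hs => hgη s hs)
    rw [heq.deriv_eq, (aux_hasDeriv_g w (hne1 t ht) (hwd t ht)).deriv]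
  have hd2 : ∀ t ∈ V, deriv (deriv η) t
      = 2*((1-t)^3)⁻¹ * w (t/(t-1)) - 4*((1-t)^4)⁻¹ * deriv w (t/(t-1))
        + ((1-t)^5)⁻¹ * deriv (deriv w) (t/(t-1)) := by
    intro t ht
    have heq : deriv η =ᶠ[nhds t]
        (fun s => ((1-s)^2)⁻¹ * w (s/(s-1)) - ((1-s)^3)⁻¹ * deriv w (s/(s-1))) :=
      Filter.eventuallyEq_of_mem (hVopen.mem_nhds ht) (fun s hs => hd1 s hs)
    rw [heq.deriv_eq,
      (aux_hasDeriv_G1 w (deriv w) (hne1 t ht) (hwd t ht) (hwd' t ht)).deriv]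
    ring
  constructor
  · intro hHeun t ht
    obtain ⟨z, hzU, rfl⟩ := hV ▸ ht
    have hz1 : z ≠ 1 := ne_of_lt (hU1 hzU)
    rw [hd2 _ ht, hd1 _ ht, hgη _ ht, aux_phi_phi hz1]
    linear_combination (aux_key_alg z (w z) (deriv w z) (deriv (deriv w) z) hz1)
      - (1-z) * (hHeun z hzU)
  · intro hHyp z hzU
    have hz1 : z ≠ 1 := ne_of_lt (hU1 hzU)
    have htV : z/(z-1) ∈ V := hV ▸ ⟨z, hzU, rfl⟩
    have hE := hHyp _ htV
    rw [hd2 _ htV, hd1 _ htV, hgη _ htV, aux_phi_phi hz1] at hE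
    have h0 : -(1-z) * (z * (1 - z) ^ 2 * deriv (deriv w) z
        + (1 - 3 * z) * (1 - z) * deriv w z + (z - 3 / 4) * w z) = 0 := by
      linear_combination hE - (aux_key_alg z (w z) (deriv w z) (deriv (deriv w) z) hz1)
    have h4 : -((1:ℝ)-z) ≠ 0 := by
      intro h; apply hz1; linarith [h]
    exact (mul_eq_zero.mp h0).resolve_left h4
end

section
/- Define f(z) = (1-z)^{-1} · ₂F₁(1/2, 1/2; 1; z/(z-1)) for z < 1/2 (note that z < 1/2 implies |z/(z-1)| < 1, so the hypergeometric series converges). Then f(0) = 1 and f satisfies the differential equation z(1-z)²·f''(z) + (1-3z)(1-z)·f'(z) + (z - 3/4)·f(z) = 0 for every z < 1/2. -/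
open Polynomial

/-- coefficients of ₂F₁(1/2,1/2;1;x) -/
noncomputable def hcoef (n : ℕ) : ℝ :=
  ((ascPochhammer ℝ n).eval (1/2 : ℝ))^2 / (n.factorial : ℝ)^2

lemma poch_half_nonneg (n : ℕ) : 0 ≤ (ascPochhammer ℝ n).eval (1/2 : ℝ) := by
  induction n with
  | zero => simp [ascPochhammer_zero]
  | succ n ih =>
    rw [ascPochhammer_succ_right]
    simp only [eval_mul, eval_add, eval_X, eval_natCast]
    positivity

lemma poch_half_le (n : ℕ) : (ascPochhammer ℝ n).eval (1/2 : ℝ) ≤ (n.factorial : ℝ) := by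
  induction n with
  | zero => simp [ascPochhammer_zero]
  | succ n ih =>
    rw [ascPochhammer_succ_right]
    simp only [eval_mul, eval_add, eval_X, eval_natCast, Nat.factorial_succ, Nat.cast_mul]
    have h1 : (0:ℝ) ≤ (1/2 : ℝ) + n := by positivity
    calc (ascPochhammer ℝ n).eval (1/2:ℝ) * ((1/2:ℝ) + n)
        ≤ (n.factorial : ℝ) * ((1/2:ℝ) + n) :=
          mul_le_mul_of_nonneg_right ih h1
      _ ≤ (n.factorial : ℝ) * ((n:ℝ) + 1) := by
          apply mul_le_mul_of_nonneg_left _ (by positivity)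
          linarith
      _ = ((n:ℝ)+1) * (n.factorial : ℝ) := by ring
      _ = (((n:ℕ)+1 : ℕ):ℝ) * (n.factorial : ℝ) := by push_cast; ring

lemma hcoef_nonneg (n : ℕ) : 0 ≤ hcoef n := by
  unfold hcoef; positivity

lemma hcoef_le_one (n : ℕ) : hcoef n ≤ 1 := by
  unfold hcoef
  rw [div_le_one (by positivity)]
  have h0 := poch_half_nonneg n
  have h1 := poch_half_le n
  exact pow_le_pow_left₀ h0 h1 2

lemma hcoef_rec (n : ℕ) :
    ((n:ℝ)+1)^2 * hcoef (n+1) = ((n:ℝ)+1/2)^2 * hcoef n := by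
  unfold hcoef
  rw [ascPochhammer_succ_right]
  simp only [eval_mul, eval_add, eval_X, eval_natCast, Nat.factorial_succ, Nat.cast_mul]
  have hfac : (n.factorial : ℝ) ≠ 0 := Nat.cast_ne_zero.mpr n.factorial_ne_zero
  have hn1 : ((n:ℝ)+1) ≠ 0 := by positivity
  field_simp
  push_cast
  ring

lemma summable_poly_geom (k : ℕ) {r : ℝ} (hr : |r| < 1) (hr0 : 0 ≤ r) :
    Summable fun n : ℕ => ((n:ℝ)+1)^k * r^n := by
  have hs : Summable fun n : ℕ => (n:ℝ)^k * r^n :=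
    summable_pow_mul_geometric_of_norm_lt_one k (by rwa [Real.norm_eq_abs])
  have hs2 : Summable fun n : ℕ => (2:ℝ)^k * ((n:ℝ)^k * r^n) + (2:ℝ)^k * r^n :=
    ((hs.mul_left _).add (((summable_geometric_of_lt_one hr0 (abs_lt.mp hr).2)).mul_left _))
  refine hs2.of_nonneg_of_le (fun n => by positivity) (fun n => ?_)
  have key : ((n:ℝ)+1)^k ≤ (2:ℝ)^k * (n:ℝ)^k + (2:ℝ)^k := by
    rcases Nat.eq_zero_or_pos n with h | h
    · subst h; simp
      have h2 : (1:ℝ) ≤ 2^k := one_le_pow₀ (by norm_num : (1:ℝ) ≤ 2)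
      have h3 : (0:ℝ) ≤ 2^k * (0:ℝ)^k := by positivity
      linarith
    · have h1 : ((n:ℝ)+1) ≤ 2 * (n:ℝ) := by
        have : (1:ℝ) ≤ (n:ℝ) := by exact_mod_cast h
        linarith
      calc ((n:ℝ)+1)^k ≤ (2*(n:ℝ))^k := pow_le_pow_left₀ (by positivity) h1 k
        _ = (2:ℝ)^k * (n:ℝ)^k := by rw [mul_pow]
        _ ≤ _ := by nlinarith [pow_pos (by norm_num : (0:ℝ)<2) k]
  calc ((n:ℝ)+1)^k * r^n ≤ ((2:ℝ)^k * (n:ℝ)^k + (2:ℝ)^k) * r^n :=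
        mul_le_mul_of_nonneg_right key (by positivity)
    _ = (2:ℝ)^k * ((n:ℝ)^k * r^n) + (2:ℝ)^k * r^n := by ring

lemma summable_of_poly_bound {a : ℕ → ℝ} (k : ℕ) (ha : ∀ n, |a n| ≤ ((n:ℝ)+1)^k)
    {x : ℝ} (hx : |x| < 1) : Summable fun n : ℕ => a n * x^n := by
  refine (summable_poly_geom k (by rwa [abs_abs]) (abs_nonneg x)).of_norm_bounded (fun n => ?_)
  rw [Real.norm_eq_abs, abs_mul, abs_pow]
  exact mul_le_mul_of_nonneg_right (ha n) (by positivity)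

lemma hasDerivAt_psum {a : ℕ → ℝ} {k : ℕ} (ha : ∀ n, |a n| ≤ ((n:ℝ)+1)^k)
    {x : ℝ} (hx : |x| < 1) :
    HasDerivAt (fun y => ∑' n : ℕ, a n * y ^ n)
      (∑' n : ℕ, (((n:ℝ)+1) * a (n+1)) * x ^ n) x := by
  set r : ℝ := (1 + |x|)/2 with hrdef
  have hxr : |x| < r := by simp [hrdef]; linarith
  have hr1 : r < 1 := by simp [hrdef]; linarith
  have hr0 : 0 < r := by have := abs_nonneg x; simp [hrdef]; linarith
  have hu : Summable fun n : ℕ => ((n:ℝ)+1)^(k+1) * r^n / r :=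
    (summable_poly_geom (k+1) (by rwa [abs_of_pos hr0]) hr0.le).div_const r
  have hbound : ∀ (n : ℕ) (y : ℝ), |y| ≤ r →
      ‖a n * ((n:ℝ) * y^(n-1))‖ ≤ ((n:ℝ)+1)^(k+1) * r^n / r := by
    intro n y hy
    rcases Nat.eq_zero_or_pos n with h | h
    · subst h; simp; positivity
    · obtain ⟨m, rfl⟩ := Nat.exists_eq_add_of_lt h
      simp only [Nat.zero_add] at *
      have h1 : ‖a (m+1) * (((m:ℕ)+1 : ℕ) * y^m)‖ =
          |a (m+1)| * (((m:ℝ)+1) * |y|^m) := by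
        rw [Real.norm_eq_abs, abs_mul, abs_mul, abs_pow]
        push_cast
        rw [abs_of_nonneg (by positivity : (0:ℝ) ≤ (m:ℝ)+1)]
      have h2 : |y|^m ≤ r^m := pow_le_pow_left₀ (abs_nonneg y) hy m
      have h3 : |a (m+1)| ≤ ((m:ℝ)+2)^k := by
        have := ha (m+1); push_cast at this
        rw [show ((m:ℝ)+1+1) = (m:ℝ)+2 by ring] at this; exact this
      have h4 : ((m:ℝ)+1) ≤ ((m:ℝ)+2) := by linarith
      have key : |a (m+1)| * (((m:ℝ)+1) * |y|^m) ≤ ((m:ℝ)+2)^(k+1) * r^m := by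
        calc |a (m+1)| * (((m:ℝ)+1) * |y|^m)
            ≤ ((m:ℝ)+2)^k * (((m:ℝ)+2) * r^m) := by
              apply mul_le_mul h3 _ (by positivity) (by positivity)
              apply mul_le_mul h4 h2 (by positivity) (by positivity)
          _ = ((m:ℝ)+2)^(k+1) * r^m := by ring
      have hrm : ((m:ℝ)+1+1)^(k+1) * r^(m+1) / r = ((m:ℝ)+2)^(k+1) * r^m := by
        field_simp
        ring
      rw [show ((m+1 : ℕ):ℝ) = (m:ℝ)+1 by push_cast; ring] at *
      calc ‖a (m+1) * (((m:ℝ)+1) * y^(m+1-1))‖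
          = |a (m+1)| * (((m:ℝ)+1) * |y|^m) := by
            simpa using h1
        _ ≤ ((m:ℝ)+2)^(k+1) * r^m := key
        _ = ((m:ℝ)+1+1)^(k+1) * r^(m+1) / r := hrm.symm
  have hmain : HasDerivAt (fun y => ∑' n : ℕ, a n * y ^ n)
      (∑' n : ℕ, a n * ((n:ℝ) * x^(n-1))) x := by
    apply hasDerivAt_tsum_of_isPreconnected hu (Metric.isOpen_ball (x := (0:ℝ)) (ε := r))
      ((convex_ball (0:ℝ) r).isPreconnected)
      (g := fun n y => a n * y^n) (g' := fun n y => a n * ((n:ℝ) * y^(n-1)))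
      (y₀ := 0)
    · intro n y _
      exact (hasDerivAt_pow n y).const_mul (a n)
    · intro n y hy
      rw [Metric.mem_ball, Real.dist_eq, sub_zero] at hy
      exact hbound n y hy.le
    · simpa using hr0
    · apply summable_of_ne_finset_zero (s := {0})
      intro n hn
      simp only [Finset.mem_singleton] at hn
      simp [zero_pow hn]
    · rw [Metric.mem_ball, Real.dist_eq, sub_zero]; exact hxr
  convert hmain using 1
  have hsum : Summable fun n : ℕ => a n * ((n:ℝ) * x^(n-1)) := by
    refine hu.of_norm_bounded (fun n => hbound n x hxr.le)
  rw [Summable.tsum_eq_zero_add hsum]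
  simp only [Nat.cast_zero, zero_mul, mul_zero, zero_add]
  apply tsum_congr
  intro n
  push_cast
  ring_nf

noncomputable def gg0 (x : ℝ) : ℝ := ∑' n : ℕ, hcoef n * x^n
noncomputable def gg1 (x : ℝ) : ℝ := ∑' n : ℕ, (((n:ℝ)+1) * hcoef (n+1)) * x^n
noncomputable def gg2 (x : ℝ) : ℝ :=
  ∑' n : ℕ, (((n:ℝ)+1) * (((n:ℝ)+2) * hcoef (n+2))) * x^n

lemma abs_hcoef_le (n : ℕ) : |hcoef n| ≤ ((n:ℝ)+1)^0 := by
  rw [abs_of_nonneg (hcoef_nonneg n), pow_zero]; exact hcoef_le_one n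

lemma abs_d_le (n : ℕ) : |((n:ℝ)+1) * hcoef (n+1)| ≤ ((n:ℝ)+1)^1 := by
  rw [abs_mul, abs_of_nonneg (by positivity : (0:ℝ) ≤ (n:ℝ)+1), pow_one,
    abs_of_nonneg (hcoef_nonneg _)]
  nlinarith [hcoef_le_one (n+1), hcoef_nonneg (n+1)]

lemma gg0_hasDerivAt {x : ℝ} (hx : |x| < 1) : HasDerivAt gg0 (gg1 x) x :=
  hasDerivAt_psum abs_hcoef_le hx

lemma gg1_hasDerivAt {x : ℝ} (hx : |x| < 1) : HasDerivAt gg1 (gg2 x) x := by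
  have h := hasDerivAt_psum (a := fun n => ((n:ℝ)+1) * hcoef (n+1)) (k := 1) abs_d_le hx
  convert h using 1
  · rfl
  apply tsum_congr
  intro n
  push_cast
  ring_nf

lemma gg_ode {x : ℝ} (hx : |x| < 1) :
    x * (1-x) * gg2 x + (1 - 2*x) * gg1 x - gg0 x / 4 = 0 := by
  set A : ℕ → ℝ := fun n => ((n:ℝ) * (((n:ℝ)+1) * hcoef (n+1))) * x^n with hA
  set B : ℕ → ℝ := fun n => ((n:ℝ) * (((n:ℝ)-1) * hcoef n)) * x^n with hB
  set C : ℕ → ℝ := fun n => ((n:ℝ) * hcoef n) * x^n with hC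
  set D : ℕ → ℝ := fun n => (((n:ℝ)+1) * hcoef (n+1)) * x^n with hD
  set C0 : ℕ → ℝ := fun n => hcoef n * x^n with hC0
  have bound : ∀ n : ℕ, (0:ℝ) ≤ (n:ℝ) := fun n => Nat.cast_nonneg n
  have sA : Summable A := by
    apply summable_of_poly_bound 2 (fun n => ?_) hx
    rw [abs_mul, abs_of_nonneg (bound n), abs_mul,
      abs_of_nonneg (by positivity : (0:ℝ) ≤ (n:ℝ)+1), abs_of_nonneg (hcoef_nonneg _)]
    nlinarith [hcoef_le_one (n+1), hcoef_nonneg (n+1), bound n]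
  have sB : Summable B := by
    apply summable_of_poly_bound 2 (fun n => ?_) hx
    rw [abs_mul, abs_of_nonneg (bound n), abs_mul, abs_of_nonneg (hcoef_nonneg _)]
    have h1 : |(n:ℝ)-1| ≤ (n:ℝ)+1 := by
      rw [abs_le]; constructor <;> nlinarith [bound n]
    calc (n:ℝ) * (|(n:ℝ)-1| * hcoef n) ≤ (n:ℝ) * (((n:ℝ)+1) * 1) := by
          apply mul_le_mul_of_nonneg_left _ (bound n)
          exact mul_le_mul h1 (hcoef_le_one n) (hcoef_nonneg n) (by positivity)
      _ ≤ ((n:ℝ)+1)^2 := by nlinarith [bound n]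
  have sC : Summable C := by
    apply summable_of_poly_bound 2 (fun n => ?_) hx
    rw [abs_mul, abs_of_nonneg (bound n), abs_of_nonneg (hcoef_nonneg _)]
    nlinarith [hcoef_le_one n, hcoef_nonneg n, bound n]
  have sD : Summable D := by
    apply summable_of_poly_bound 2 (fun n => ?_) hx
    rw [abs_mul, abs_of_nonneg (by positivity : (0:ℝ) ≤ (n:ℝ)+1),
      abs_of_nonneg (hcoef_nonneg _)]
    nlinarith [hcoef_le_one (n+1), hcoef_nonneg (n+1), bound n]
  have sC0 : Summable C0 := summable_of_poly_bound 0 abs_hcoef_le hx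
  -- x * gg2 x = ∑' A
  have hxg2 : x * gg2 x = ∑' n, A n := by
    rw [gg2, ← tsum_mul_left, Summable.tsum_eq_zero_add sA]
    simp only [hA, Nat.cast_zero, zero_mul, zero_add]
    apply tsum_congr; intro n; push_cast; ring
  -- x^2 * gg2 x = ∑' B
  have hx2g2 : x^2 * gg2 x = ∑' n, B n := by
    rw [gg2, ← tsum_mul_left, Summable.tsum_eq_zero_add sB,
      Summable.tsum_eq_zero_add ((summable_nat_add_iff 1).mpr sB)]
    simp only [hB, Nat.cast_zero, zero_mul, zero_add, Nat.cast_one]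
    rw [show ((1:ℝ) * ((1 - 1) * hcoef 1)) * x ^ 1 = 0 by ring, zero_add]
    apply tsum_congr; intro n; push_cast; ring
  -- x * gg1 x = ∑' C
  have hxg1 : x * gg1 x = ∑' n, C n := by
    rw [gg1, ← tsum_mul_left, Summable.tsum_eq_zero_add sC]
    simp only [hC, Nat.cast_zero, zero_mul, zero_add]
    apply tsum_congr; intro n; push_cast; ring
  have hkey : ∑' n : ℕ, (A n - B n + D n - 2 * C n - C0 n / 4) = 0 := by
    have : ∀ n : ℕ, A n - B n + D n - 2 * C n - C0 n / 4 = 0 := by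
      intro n
      have hr := hcoef_rec n
      simp only [hA, hB, hC, hD, hC0]
      linear_combination x^n * hr
    simp only [this, tsum_zero]
  have hsplit : ∑' n : ℕ, (A n - B n + D n - 2 * C n - C0 n / 4)
      = (∑' n, A n) - (∑' n, B n) + (∑' n, D n) - 2 * (∑' n, C n) - (∑' n, C0 n) / 4 := by
    rw [Summable.tsum_sub (((sA.sub sB).add sD).sub (sC.mul_left 2)) (sC0.div_const 4),
      Summable.tsum_sub ((sA.sub sB).add sD) (sC.mul_left 2),
      Summable.tsum_add (sA.sub sB) sD, Summable.tsum_sub sA sB, tsum_mul_left, tsum_div_const]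
  have hG0 : gg0 x = ∑' n, C0 n := rfl
  have hG1 : gg1 x = ∑' n, D n := rfl
  nlinarith [hkey, hsplit, hxg2, hx2g2, hxg1, hG0, hG1]

/-- The Gauss hypergeometric series `₂F₁(a,b;c;x)`. -/
noncomputable def twoF1 (a b c x : ℝ) : ℝ :=
  ∑' n : ℕ, ((ascPochhammer ℝ n).eval a * (ascPochhammer ℝ n).eval b) /
    ((ascPochhammer ℝ n).eval c * (n.factorial : ℝ)) * x ^ n

lemma twoF1_eq_gg0 (x : ℝ) : twoF1 (1/2) (1/2) 1 x = gg0 x := by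
  unfold twoF1 gg0 hcoef
  apply tsum_congr
  intro n
  rw [ascPochhammer_eval_one]
  ring

lemma gg0_zero : gg0 0 = 1 := by
  unfold gg0
  rw [tsum_eq_single 0 (fun n hn => by simp [zero_pow hn])]
  simp [hcoef, ascPochhammer_zero]

lemma abs_frac_lt_one {z : ℝ} (hz : z < 1/2) : |z / (z-1)| < 1 := by
  have h1 : z - 1 < 0 := by linarith
  rw [abs_div, abs_of_neg h1, div_lt_one (by linarith), abs_lt]
  constructor <;> linarith

noncomputable def FF (z : ℝ) : ℝ := (1-z)⁻¹ * gg0 (z/(z-1))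
noncomputable def FF1 (z : ℝ) : ℝ :=
  ((1-z)⁻¹)^2 * gg0 (z/(z-1)) - ((1-z)⁻¹)^3 * gg1 (z/(z-1))
noncomputable def FF2 (z : ℝ) : ℝ :=
  2*((1-z)⁻¹)^3 * gg0 (z/(z-1)) - 4*((1-z)⁻¹)^4 * gg1 (z/(z-1))
    + ((1-z)⁻¹)^5 * gg2 (z/(z-1))

lemma hasDerivAt_u {z : ℝ} (hz1 : z - 1 ≠ 0) :
    HasDerivAt (fun z : ℝ => z/(z-1)) (-((z-1)^2)⁻¹) z := by
  have h := (hasDerivAt_id z).div ((hasDerivAt_id z).sub_const 1) hz1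
  refine h.congr_deriv (Eq.symm ?_)
  simp only [id]
  field_simp
  ring

lemma FF_hasDerivAt {z : ℝ} (hz : z < 1/2) : HasDerivAt FF (FF1 z) z := by
  have hz1 : z - 1 ≠ 0 := by intro h; nlinarith [h]
  have h1z : (1:ℝ) - z ≠ 0 := by intro h; nlinarith [h]
  have hu := hasDerivAt_u hz1
  have hg := (gg0_hasDerivAt (abs_frac_lt_one hz)).comp z hu
  have hp : HasDerivAt (fun z : ℝ => (1-z)⁻¹) (((1-z)^2)⁻¹) z := by
    have h := ((hasDerivAt_const z (1:ℝ)).sub (hasDerivAt_id z)).inv h1z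
    refine h.congr_deriv (Eq.symm ?_)
    simp only [id, Pi.sub_apply]
    field_simp
    ring
  have hmul := hp.mul hg
  refine hmul.congr_deriv (Eq.symm ?_)
  unfold FF1
  show _ = ((1-z)^2)⁻¹ * ((gg0 ∘ fun z => z/(z-1)) z) + (1-z)⁻¹ * (gg1 (z/(z-1)) * (-((z-1)^2)⁻¹))
  simp only [Function.comp_apply]
  have h : (z-1)^2 = (1-z)^2 := by ring
  rw [h]
  field_simp
  ring

lemma FF1_hasDerivAt {z : ℝ} (hz : z < 1/2) : HasDerivAt FF1 (FF2 z) z := by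
  have hz1 : z - 1 ≠ 0 := by intro h; nlinarith [h]
  have h1z : (1:ℝ) - z ≠ 0 := by intro h; nlinarith [h]
  have hu := hasDerivAt_u hz1
  have hg0 := (gg0_hasDerivAt (abs_frac_lt_one hz)).comp z hu
  have hg1 := (gg1_hasDerivAt (abs_frac_lt_one hz)).comp z hu
  have hp : HasDerivAt (fun z : ℝ => (1-z)⁻¹) (((1-z)^2)⁻¹) z := by
    have h := ((hasDerivAt_const z (1:ℝ)).sub (hasDerivAt_id z)).inv h1z
    refine h.congr_deriv (Eq.symm ?_)
    simp only [id, Pi.sub_apply]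
    field_simp
    ring
  have hterm1 := (hp.pow 2).mul hg0
  have hterm2 := (hp.pow 3).mul hg1
  have hmain := hterm1.sub hterm2
  refine hmain.congr_deriv (Eq.symm ?_)
  unfold FF2
  show _ = ((2:ℕ) * (1-z)⁻¹^(2-1) * ((1-z)^2)⁻¹) * ((gg0 ∘ fun z => z/(z-1)) z)
        + (1-z)⁻¹^2 * (gg1 (z/(z-1)) * (-((z-1)^2)⁻¹))
      - (((3:ℕ) * (1-z)⁻¹^(3-1) * ((1-z)^2)⁻¹) * ((gg1 ∘ fun z => z/(z-1)) z)
        + (1-z)⁻¹^3 * (gg2 (z/(z-1)) * (-((z-1)^2)⁻¹)))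
  simp only [Function.comp_apply]
  have h : (z-1)^2 = (1-z)^2 := by ring
  rw [h]
  push_cast
  field_simp
  ring

/-- The function `f(z) = (1-z)⁻¹ ₂F₁(1/2,1/2;1;z/(z-1))` satisfies
`f(0) = 1` and the singly confluent Heun equation for all `z < 1/2`. -/
theorem heun_solution_hypergeometric
    (f : ℝ → ℝ) (hf : ∀ z < (1 / 2 : ℝ), f z = (1 - z)⁻¹ * twoF1 (1/2) (1/2) 1 (z / (z - 1))) :
    f 0 = 1 ∧ ∀ z < (1 / 2 : ℝ),
      z * (1 - z) ^ 2 * deriv (deriv f) z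
        + (1 - 3 * z) * (1 - z) * deriv f z + (z - 3 / 4) * f z = 0 := by
  have hfF : ∀ z < (1/2 : ℝ), f z = FF z := by
    intro z hz
    rw [hf z hz, twoF1_eq_gg0]; rfl
  constructor
  · rw [hfF 0 (by norm_num)]
    unfold FF
    norm_num [gg0_zero]
  · intro z hz
    have hz1 : z - 1 ≠ 0 := by intro h; nlinarith [h]
    have h1z : (1:ℝ) - z ≠ 0 := by intro h; nlinarith [h]
    have hmem : Set.Iio (1/2 : ℝ) ∈ nhds z := Iio_mem_nhds hz
    have hev : f =ᶠ[nhds z] FF :=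
      Filter.eventuallyEq_of_mem hmem (fun y hy => hfF y hy)
    have hderF : ∀ y < (1/2:ℝ), deriv FF y = FF1 y :=
      fun y hy => (FF_hasDerivAt hy).deriv
    have hd1 : deriv f z = FF1 z := hev.deriv_eq.trans (hderF z hz)
    have hev1 : deriv f =ᶠ[nhds z] FF1 :=
      hev.deriv.trans (Filter.eventuallyEq_of_mem hmem (fun y hy => hderF y hy))
    have hd2 : deriv (deriv f) z = FF2 z :=
      hev1.deriv_eq.trans (FF1_hasDerivAt hz).deriv
    rw [hd1, hd2, hfF z hz]
    have hode := gg_ode (abs_frac_lt_one hz)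
    set a := gg0 (z/(z-1)) with ha
    set b := gg1 (z/(z-1)) with hb
    set c := gg2 (z/(z-1)) with hc
    unfold FF FF1 FF2
    rw [← ha, ← hb, ← hc]
    field_simp at hode
    have ha2 : a = (-4*z*(z-1)*c - 4*(1+z)*(z-1)^2*b)/(z-1)^3 :=
      (eq_div_iff (pow_ne_zero 3 hz1)).mpr (by linear_combination -(z-1)*hode)
    rw [ha2]
    field_simp
    ring
end

section
/- (Proposition 1.) Let 0 < r and let (Jₙ)_{n≥0} be a real sequence such that the power series w(z) = ∑_{n=0}^∞ Jₙ zⁿ converges for |z| < r and its sum satisfies z(1-z)²·w''(z) + (1-3z)(1-z)·w'(z) + (z - 3/4)·w(z) = 0 for all z ∈ (-r, r). Then for every z with |z| < min(r, 1/2), w(z) = J₀ · (1-z)^{-1} · ₂F₁(1/2, 1/2; 1; z/(z-1)). -/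
set_option linter.unreachableTactic false
set_option linter.unusedTactic false

/-- coefficient `((1/2)_k / k!)^2` -/
noncomputable def HeunAux.aa (k : ℕ) : ℝ :=
  ((ascPochhammer ℝ k).eval (1/2 : ℝ) / (k.factorial : ℝ))^2

namespace HeunAux

lemma aa_zero : aa 0 = 1 := by simp [aa]

lemma aa_nonneg (k : ℕ) : 0 ≤ aa k := sq_nonneg _

lemma aa_rec (k : ℕ) : 4 * ((k:ℝ)+1)^2 * aa (k+1) = (2*(k:ℝ)+1)^2 * aa k := by
  have hf : ((k.factorial : ℝ)) ≠ 0 := Nat.cast_ne_zero.mpr k.factorial_ne_zero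
  have hk1 : ((k:ℝ)+1) ≠ 0 := by positivity
  simp only [aa, ascPochhammer_succ_eval, Nat.factorial_succ]
  push_cast
  field_simp
  ring

lemma aa_one : aa 1 = 1/4 := by
  have := aa_rec 0
  rw [aa_zero] at this
  push_cast at this
  nlinarith [this]

lemma aa_le_one (k : ℕ) : aa k ≤ 1 := by
  induction k with
  | zero => rw [aa_zero]
  | succ k ih =>
    have h := aa_rec k
    have h2 : aa (k+1) = (2*(k:ℝ)+1)^2 / (4*((k:ℝ)+1)^2) * aa k := by
      have : (4*((k:ℝ)+1)^2) ≠ 0 := by positivity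
      field_simp
      linarith [h]
    rw [h2]
    have hle : (2*(k:ℝ)+1)^2 / (4*((k:ℝ)+1)^2) ≤ 1 := by
      rw [div_le_one (by positivity)]
      nlinarith [Nat.cast_nonneg (α := ℝ) k]
    calc (2*(k:ℝ)+1)^2 / (4*((k:ℝ)+1)^2) * aa k ≤ 1 * aa k := by
          exact mul_le_mul_of_nonneg_right hle (aa_nonneg k)
      _ ≤ 1 := by rw [one_mul]; exact ih

/-- Key binomial identity (WZ-style): for `m = p+1 ≥ 1` and every `k`,
`4 m²₊ C(m+1,k) + 4 m² C(m-1,k) = (8m²+8m+3+(2k+1)²) C(m,k) + 4k² C(m,k-1)`. -/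
lemma key_binom (p k : ℕ) :
    4*((p:ℝ)+2)^2 * (((p+2).choose k : ℕ) : ℝ) + 4*((p:ℝ)+1)^2 * ((p.choose k : ℕ) : ℝ)
    = (8*((p:ℝ)+1)^2 + 8*((p:ℝ)+1) + 3 + (2*(k:ℝ)+1)^2) * (((p+1).choose k : ℕ) : ℝ)
      + 4*(k:ℝ)^2 * (((p+1).choose (k-1) : ℕ) : ℝ) := by
  rcases Nat.eq_zero_or_pos k with rfl | hk
  · simp; ring
  rcases le_or_gt k p with hkp | h1
  · -- generic case 1 ≤ k ≤ p
    obtain ⟨j, rfl⟩ : ∃ j, k = j+1 := ⟨k-1, by omega⟩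
    obtain ⟨m2, rfl⟩ : ∃ m2, p = j+1+m2 := ⟨p-(j+1), by omega⟩
    have hfj : ((j.factorial : ℕ) : ℝ) ≠ 0 := Nat.cast_ne_zero.mpr j.factorial_ne_zero
    have hfm : ((m2.factorial : ℕ) : ℝ) ≠ 0 := Nat.cast_ne_zero.mpr m2.factorial_ne_zero
    have hfN : (((j+1+m2).factorial : ℕ) : ℝ) ≠ 0 := Nat.cast_ne_zero.mpr (j+1+m2).factorial_ne_zero
    have e1 : (((j+1+m2+2).choose (j+1) : ℕ) : ℝ)
        = ((j+1+m2+2).factorial : ℝ) / (((j+1).factorial : ℝ) * ((m2+2).factorial : ℝ)) := by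
      rw [Nat.cast_choose ℝ (by omega), show (j+1+m2+2) - (j+1) = m2+2 by omega]
    have e2 : (((j+1+m2).choose (j+1) : ℕ) : ℝ)
        = ((j+1+m2).factorial : ℝ) / (((j+1).factorial : ℝ) * ((m2).factorial : ℝ)) := by
      rw [Nat.cast_choose ℝ (by omega), show (j+1+m2) - (j+1) = m2 by omega]
    have e3 : (((j+1+m2+1).choose (j+1) : ℕ) : ℝ)
        = ((j+1+m2+1).factorial : ℝ) / (((j+1).factorial : ℝ) * ((m2+1).factorial : ℝ)) := by
      rw [Nat.cast_choose ℝ (by omega), show (j+1+m2+1) - (j+1) = m2+1 by omega]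
    have e4 : (((j+1+m2+1).choose (j+1-1) : ℕ) : ℝ)
        = ((j+1+m2+1).factorial : ℝ) / (((j).factorial : ℝ) * ((m2+2).factorial : ℝ)) := by
      rw [show j+1-1 = j by omega, Nat.cast_choose ℝ (by omega),
        show (j+1+m2+1) - j = m2+2 by omega]
    have f1 : ((j+1+m2+2).factorial : ℝ)
        = ((j:ℝ)+1+m2+2) * ((j:ℝ)+1+m2+1) * ((j+1+m2).factorial : ℝ) := by
      rw [show j+1+m2+2 = (j+1+m2+1)+1 by ring, Nat.factorial_succ,
        show j+1+m2+1 = (j+1+m2)+1 by ring, Nat.factorial_succ]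
      push_cast; ring
    have f2 : ((j+1+m2+1).factorial : ℝ) = ((j:ℝ)+1+m2+1) * ((j+1+m2).factorial : ℝ) := by
      rw [show j+1+m2+1 = (j+1+m2)+1 by ring, Nat.factorial_succ]; push_cast; ring
    have f3 : (((m2+2).factorial : ℕ) : ℝ) = ((m2:ℝ)+2) * ((m2:ℝ)+1) * ((m2.factorial : ℕ) : ℝ) := by
      rw [show m2+2 = (m2+1)+1 by ring, Nat.factorial_succ, Nat.factorial_succ]; push_cast; ring
    have f4 : (((m2+1).factorial : ℕ) : ℝ) = ((m2:ℝ)+1) * ((m2.factorial : ℕ) : ℝ) := by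
      rw [Nat.factorial_succ]; push_cast; ring
    have f5 : (((j+1).factorial : ℕ) : ℝ) = ((j:ℝ)+1) * ((j.factorial : ℕ) : ℝ) := by
      rw [Nat.factorial_succ]; push_cast; ring
    rw [e1, e2, e3, e4, f1, f2, f3, f4, f5]
    have hj1 : ((j:ℝ)+1) ≠ 0 := by positivity
    have hm1 : ((m2:ℝ)+1) ≠ 0 := by positivity
    have hm2 : ((m2:ℝ)+2) ≠ 0 := by positivity
    push_cast
    field_simp
    ring
  rcases (by omega : k = p+1 ∨ k = p+2 ∨ p+3 ≤ k) with rfl | rfl | h3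
  · -- k = p+1
    rw [show p+1+1 = p+2 by ring] at *
    rw [show (p+1)-1 = p by omega]
    simp [Nat.choose_succ_self_right, Nat.choose_self, Nat.choose_eq_zero_of_lt (by omega : p < p+1)]
    try (push_cast; ring)
  · -- k = p+2
    rw [show (p+2)-1 = p+1 by omega]
    simp [Nat.choose_self, Nat.choose_eq_zero_of_lt (by omega : p < p+2),
      Nat.choose_eq_zero_of_lt (by omega : p+1 < p+2)]
    try (push_cast; ring)
  · -- k ≥ p+3
    rw [Nat.choose_eq_zero_of_lt (by omega), Nat.choose_eq_zero_of_lt (by omega),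
      Nat.choose_eq_zero_of_lt (by omega), Nat.choose_eq_zero_of_lt (by omega)]
    simp

/-- `d n = Σ_{k≤n} (-1)^k C(n,k) a_k`. -/
noncomputable def dd (n : ℕ) : ℝ :=
  ∑ k ∈ Finset.range (n+1), (-1:ℝ)^k * (n.choose k : ℝ) * aa k

lemma dd_zero : dd 0 = 1 := by simp [dd, aa_zero]

lemma dd_one : dd 1 = 3/4 := by
  simp [dd, Finset.sum_range_succ, aa_zero, aa_one]
  norm_num

lemma dd_rec (p : ℕ) :
    ((p:ℝ)+2)^2 * dd (p+2)
      = (2*((p:ℝ)+1)^2 + 2*((p:ℝ)+1) + 3/4) * dd (p+1) - ((p:ℝ)+1)^2 * dd p := by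
  set G : ℕ → ℝ := fun k => (-1:ℝ)^k * aa k * (k:ℝ)^2 * (((p+1).choose (k-1) : ℕ) : ℝ) with hG
  have hdd1 : dd (p+1) = ∑ k ∈ Finset.range (p+3), (-1:ℝ)^k * ((p+1).choose k : ℝ) * aa k := by
    rw [show p+3 = (p+2)+1 by ring, Finset.sum_range_succ,
      Nat.choose_eq_zero_of_lt (show p+1 < p+2 by omega), dd, show p+1+1 = p+2 by omega]
    simp
  have hdd0 : dd p = ∑ k ∈ Finset.range (p+3), (-1:ℝ)^k * (p.choose k : ℝ) * aa k := by
    rw [show p+3 = (p+2)+1 by ring, Finset.sum_range_succ, Finset.sum_range_succ,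
      Nat.choose_eq_zero_of_lt (show p < p+1 by omega),
      Nat.choose_eq_zero_of_lt (show p < p+2 by omega), dd]
    simp
  have main : ∑ k ∈ Finset.range (p+3), ((-1:ℝ)^k * aa k *
      (4*((p:ℝ)+2)^2 * (((p+2).choose k : ℕ) : ℝ)
        - (8*((p:ℝ)+1)^2 + 8*((p:ℝ)+1) + 3) * (((p+1).choose k : ℕ) : ℝ)
        + 4*((p:ℝ)+1)^2 * ((p.choose k : ℕ) : ℝ))) = 0 := by
    have step : ∀ k ∈ Finset.range (p+3), ((-1:ℝ)^k * aa k *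
        (4*((p:ℝ)+2)^2 * (((p+2).choose k : ℕ) : ℝ)
          - (8*((p:ℝ)+1)^2 + 8*((p:ℝ)+1) + 3) * (((p+1).choose k : ℕ) : ℝ)
          + 4*((p:ℝ)+1)^2 * ((p.choose k : ℕ) : ℝ))) = 4 * (G k - G (k+1)) := by
      intro k _
      have hb := key_binom p k
      have ha := aa_rec k
      simp only [hG, Nat.add_sub_cancel, pow_succ]
      push_cast
      linear_combination ((-1:ℝ)^k * aa k) * hb
        - ((-1:ℝ)^k * (((p+1).choose k : ℕ) : ℝ)) * ha
    rw [Finset.sum_congr rfl step, ← Finset.mul_sum, Finset.sum_range_sub' G (p+3)]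
    have g0 : G 0 = 0 := by simp [hG]
    have g1 : G (p+3) = 0 := by
      simp only [hG]
      rw [show (p+3)-1 = p+2 by omega, Nat.choose_eq_zero_of_lt (show p+1 < p+2 by omega)]
      simp
    rw [g0, g1]
    ring
  have expand : ∑ k ∈ Finset.range (p+3), ((-1:ℝ)^k * aa k *
      (4*((p:ℝ)+2)^2 * (((p+2).choose k : ℕ) : ℝ)
        - (8*((p:ℝ)+1)^2 + 8*((p:ℝ)+1) + 3) * (((p+1).choose k : ℕ) : ℝ)
        + 4*((p:ℝ)+1)^2 * ((p.choose k : ℕ) : ℝ)))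
      = 4*((p:ℝ)+2)^2 * dd (p+2) - (8*((p:ℝ)+1)^2 + 8*((p:ℝ)+1) + 3) * dd (p+1)
        + 4*((p:ℝ)+1)^2 * dd p := by
    rw [hdd1, hdd0, dd]
    rw [show p+2+1 = p+3 by ring]
    rw [Finset.mul_sum, Finset.mul_sum, Finset.mul_sum, ← Finset.sum_sub_distrib,
      ← Finset.sum_add_distrib]
    exact Finset.sum_congr rfl fun k _ => by ring
  rw [expand] at main
  linarith

lemma twoF1_eq (x : ℝ) : twoF1 (1/2) (1/2) 1 x = ∑' k, aa k * x^k := by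
  unfold twoF1
  refine tsum_congr fun k => ?_
  rw [ascPochhammer_eval_one, aa]
  have hf : ((k.factorial : ℕ) : ℝ) ≠ 0 := Nat.cast_ne_zero.mpr k.factorial_ne_zero
  rw [div_pow]
  ring_nf

open Finset in
private theorem tsum_prod_eq_tsum_antidiagonal (f : ℕ × ℕ → ℝ) (h : Summable f) :
    ∑' p, f p = ∑' n, ∑ kl ∈ Finset.HasAntidiagonal.antidiagonal n, f kl := by
  rw [← Finset.HasAntidiagonal.sigmaAntidiagonalEquivProd.tsum_eq f]
  have hs : Summable fun c : (n : ℕ) × {x // x ∈ antidiagonal n} => f c.2 :=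
    (Finset.HasAntidiagonal.sigmaAntidiagonalEquivProd.summable_iff (f := f)).mpr h
  have h2 := Summable.tsum_sigma' (f := fun c : (n : ℕ) × {x // x ∈ antidiagonal n} => f c.2)
    (fun n => (hasSum_fintype _).summable) hs
  rw [show ∑' (c : (n : ℕ) × { x // x ∈ antidiagonal n }), f (Finset.HasAntidiagonal.sigmaAntidiagonalEquivProd c)
      = ∑' (c : (n : ℕ) × { x // x ∈ antidiagonal n }), f c.2 from rfl, h2]
  refine tsum_congr fun n => ?_
  rw [← Finset.sum_finset_coe, ← tsum_fintype (L := SummationFilter.unconditional _)]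
  rfl

open Finset in
private theorem summable_sum_antidiagonal (f : ℕ × ℕ → ℝ) (h : Summable f) :
    Summable fun n => ∑ kl ∈ Finset.HasAntidiagonal.antidiagonal n, f kl := by
  have h' := (Finset.HasAntidiagonal.sigmaAntidiagonalEquivProd.summable_iff (f := f)).mpr h
  have h2 := h'.sigma' (fun n => (hasSum_fintype _).summable)
  refine h2.congr fun n => ?_
  rw [← Finset.sum_finset_coe, ← tsum_fintype (L := SummationFilter.unconditional _)]
  rfl

section PartTwo

private lemma h1z {z : ℝ} (hz : |z| < 1/2) : (0:ℝ) < 1 - z := by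
  have := abs_lt.mp hz
  linarith [this.2]

private lemma habs1 {z : ℝ} (hz : |z| < 1/2) : |z| < 1 := lt_trans hz (by norm_num)

private lemma hzlt {z : ℝ} (hz : |z| < 1/2) : |z| < 1 - z := by
  have h2 := abs_lt.mp hz
  rcases abs_cases z with ⟨he, _⟩ | ⟨he, _⟩ <;> rw [he] <;> linarith [h2.1, h2.2]

/-- The double-indexed family used to expand `(1-z)⁻¹ ₂F₁(·, z/(z-1))`. -/
private noncomputable def FF (z : ℝ) : ℕ × ℕ → ℝ := fun p =>
  (-1:ℝ)^p.1 * aa p.1 * (((p.2+p.1).choose p.1 : ℕ) : ℝ) * z^(p.2+p.1)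

private lemma absFF {z : ℝ} (p : ℕ × ℕ) :
    |FF z p| = aa p.1 * (((p.2+p.1).choose p.1 : ℕ) : ℝ) * |z|^(p.2+p.1) := by
  rw [FF, abs_mul, abs_mul, abs_mul, abs_pow, abs_pow, abs_neg, abs_one, one_pow, one_mul,
    abs_of_nonneg (aa_nonneg _), Nat.abs_cast]

private lemma summable_absFF {z : ℝ} (hz : |z| < 1/2) : Summable fun p => |FF z p| := by
  have h1abs : (0:ℝ) < 1 - |z| := by linarith [hz, abs_nonneg z]
  have hq : |z| / (1 - |z|) < 1 := by
    rw [div_lt_one h1abs]; linarith [hz]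
  have hq0 : (0:ℝ) ≤ |z| / (1 - |z|) := div_nonneg (abs_nonneg z) h1abs.le
  have hnorm : ‖|z|‖ < 1 := by rw [Real.norm_eq_abs, abs_abs]; exact habs1 hz
  rw [show (fun p => |FF z p|)
      = fun p : ℕ × ℕ => aa p.1 * (((p.2+p.1).choose p.1 : ℕ) : ℝ) * |z|^(p.2+p.1)
    from funext fun p => absFF p]
  rw [summable_prod_of_nonneg
    (fun p => mul_nonneg (mul_nonneg (aa_nonneg _) (by positivity)) (by positivity))]
  constructor
  · intro k
    have := (summable_choose_mul_geometric_of_norm_lt_one k hnorm).mul_left (aa k * |z|^k)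
    refine this.congr fun m => ?_
    rw [pow_add]; push_cast; ring
  · refine Summable.of_nonneg_of_le
      (fun k => tsum_nonneg fun m =>
        mul_nonneg (mul_nonneg (aa_nonneg _) (by positivity)) (by positivity))
      (fun k => ?_)
      ((summable_geometric_of_lt_one hq0 hq).mul_left (1/(1-|z|)))
    have hrow : (fun m => aa k * (((m+k).choose k : ℕ) : ℝ) * |z|^(m+k))
        = fun m => (aa k * |z|^k) * ((((m+k).choose k : ℕ) : ℝ) * |z|^m) := by
      funext m; rw [pow_add]; push_cast; ring
    rw [hrow, tsum_mul_left, tsum_choose_mul_geometric_of_norm_lt_one k hnorm]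
    have hle : aa k * |z| ^ k * (1 / (1 - |z|) ^ (k + 1))
        ≤ 1 * |z| ^ k * (1 / (1 - |z|) ^ (k + 1)) := by
      have h0 : (0:ℝ) ≤ |z| ^ k * (1 / (1 - |z|) ^ (k + 1)) := by positivity
      nlinarith [aa_le_one k, aa_nonneg k]
    refine le_trans hle (le_of_eq ?_)
    rw [pow_succ, div_pow]
    field_simp

private lemma summable_FF {z : ℝ} (hz : |z| < 1/2) : Summable (FF z) :=
  Summable.of_abs (summable_absFF hz)

/-- Part (ii): expansion of the closed form as a power series with coefficients `dd`. -/
lemma hasSum_dd {z : ℝ} (hz : |z| < 1/2) : HasSum (fun n => dd n * z^n)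
    ((1-z)⁻¹ * twoF1 (1/2) (1/2) 1 (z/(z-1))) := by
  have h1 : (1:ℝ) - z ≠ 0 := ne_of_gt (h1z hz)
  have hnorm : ‖z‖ < 1 := by rw [Real.norm_eq_abs]; exact habs1 hz
  have hrow : ∀ k : ℕ, (fun m => FF z (k, m))
      = fun m => ((-1:ℝ)^k * aa k * z^k) * ((((m+k).choose k : ℕ) : ℝ) * z^m) := by
    intro k; funext m; rw [FF, pow_add]; push_cast; ring
  have hz1 : z - 1 ≠ 0 := by intro h; apply h1; linarith
  have tpow : ∀ k : ℕ, (z/(z-1))^k = (-1:ℝ)^k * z^k / (1-z)^k := by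
    intro k
    induction k with
    | zero => simp
    | succ k ih =>
      rw [pow_succ, ih, pow_succ, pow_succ, pow_succ]
      field_simp
      ring
  have hrowsum : ∀ k : ℕ, ∑' m, FF z (k, m) = (aa k * (z/(z-1))^k) * (1-z)⁻¹ := by
    intro k
    rw [hrow k, tsum_mul_left, tsum_choose_mul_geometric_of_norm_lt_one k hnorm, tpow k,
      pow_succ]
    field_simp
  have hF := summable_FF hz
  have hfib : ∀ k : ℕ, Summable fun m => FF z (k, m) := fun k => hF.prod_factor k
  have inner : ∀ n : ℕ, ∑ kl ∈ Finset.HasAntidiagonal.antidiagonal n, FF z kl = dd n * z^n := by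
    intro n
    rw [Finset.Nat.sum_antidiagonal_eq_sum_range_succ_mk, dd, Finset.sum_mul]
    refine Finset.sum_congr rfl fun k hk => ?_
    have hkn : k ≤ n := Nat.lt_succ_iff.mp (Finset.mem_range.mp hk)
    show (-1:ℝ)^k * aa k * (((n-k+k).choose k : ℕ) : ℝ) * z^(n-k+k) = _
    rw [Nat.sub_add_cancel hkn]
    ring
  have key1 : ∑' p, FF z p = (1-z)⁻¹ * twoF1 (1/2) (1/2) 1 (z/(z-1)) := by
    rw [Summable.tsum_prod' hF hfib, tsum_congr hrowsum, tsum_mul_right, twoF1_eq]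
    ring
  have key2 : ∑' p, FF z p = ∑' n, dd n * z^n := by
    rw [tsum_prod_eq_tsum_antidiagonal (FF z) hF]
    exact tsum_congr inner
  have hsum : Summable fun n => dd n * z^n :=
    (summable_sum_antidiagonal (FF z) hF).congr inner
  exact (hsum.hasSum_iff).mpr (key2.symm.trans key1)

end PartTwo

section PartThree

open Filter
open scoped ENNReal NNReal

/-- Coefficients of a power series convergent on `(-r,r)` are bounded at any `0 < σ < r`. -/
lemma exists_bound {r : ℝ} {J : ℕ → ℝ}
    (hconv : ∀ z : ℝ, |z| < r → Summable (fun n : ℕ => J n * z ^ n))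
    {σ : ℝ} (h0 : 0 < σ) (hσ : σ < r) : ∃ C, 0 ≤ C ∧ ∀ n, |J n| * σ^n ≤ C := by
  have hs := hconv σ (by rwa [abs_of_pos h0])
  have ht : Tendsto (fun n => |J n * σ^n|) atTop (nhds 0) := by
    have := hs.tendsto_atTop_zero
    simpa using this.abs
  obtain ⟨C, hC⟩ := ht.bddAbove_range
  refine ⟨C, le_trans (by positivity) (hC ⟨0, rfl⟩ : |J 0 * σ^0| ≤ C), fun n => ?_⟩
  have h2 : |J n * σ ^ n| ≤ C := hC ⟨n, rfl⟩
  rwa [abs_mul, abs_pow, abs_of_pos h0] at h2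

private lemma summable_mul_pow_geom {q : ℝ} (h0 : 0 ≤ q) (hq : q < 1) :
    Summable fun n : ℕ => ((n:ℝ)+1) * q^n := by
  have hnorm : ‖q‖ < 1 := by rwa [Real.norm_eq_abs, abs_of_nonneg h0]
  have h1 := summable_pow_mul_geometric_of_norm_lt_one 1 hnorm
  have h2 := summable_geometric_of_lt_one h0 hq
  exact (h1.add h2).congr fun n => by push_cast; ring

/-- Summability of the termwise-differentiated coefficient series. -/
lemma summable_K1 {r : ℝ} {J : ℕ → ℝ}
    (hconv : ∀ z : ℝ, |z| < r → Summable (fun n : ℕ => J n * z ^ n))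
    {z : ℝ} (hz : |z| < r) :
    Summable fun n : ℕ => (((n:ℝ)+1) * J (n+1)) * z^n := by
  obtain ⟨σ, h0, hzσ, hσr⟩ : ∃ σ : ℝ, 0 < σ ∧ |z| < σ ∧ σ < r := by
    refine ⟨(|z| + r)/2, ?_, ?_, ?_⟩ <;> (have := abs_nonneg z; linarith)
  obtain ⟨C, hC0, hC⟩ := exists_bound hconv h0 hσr
  have hσne : σ ≠ 0 := ne_of_gt h0
  have hq0 : 0 ≤ |z|/σ := div_nonneg (abs_nonneg z) h0.le
  have hq : |z|/σ < 1 := (div_lt_one h0).mpr hzσ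
  refine Summable.of_abs (Summable.of_nonneg_of_le (fun n => abs_nonneg _) (fun n => ?_)
    (((summable_mul_pow_geom hq0 hq).mul_left (C/σ))))
  have hJ : |J (n+1)| ≤ C / σ^(n+1) := by
    rw [le_div_iff₀ (by positivity)]
    exact hC (n+1)
  have e1 : |(((n:ℝ)+1) * J (n+1)) * z^n| = ((n:ℝ)+1) * |J (n+1)| * |z|^n := by
    rw [abs_mul, abs_mul, abs_pow, abs_of_nonneg (by positivity : (0:ℝ) ≤ (n:ℝ)+1)]
  rw [e1]
  have h3 : ((n:ℝ)+1) * |J (n+1)| * |z|^n ≤ ((n:ℝ)+1) * (C / σ^(n+1)) * |z|^n := by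
    gcongr
  refine le_trans h3 (le_of_eq ?_)
  rw [div_pow, pow_succ]
  field_simp

/-- Term-by-term differentiation of a power series. -/
lemma hasDerivAt_tsum_pow {r : ℝ} {J : ℕ → ℝ}
    (hconv : ∀ z : ℝ, |z| < r → Summable (fun n : ℕ => J n * z ^ n))
    {z : ℝ} (hz : |z| < r) :
    HasDerivAt (fun y => ∑' n : ℕ, J n * y^n)
      (∑' n : ℕ, (((n:ℝ)+1) * J (n+1)) * z^n) z := by
  obtain ⟨ρ, σ, hρ0, hσ0, hzρ, hρσ, hσr⟩ :
      ∃ ρ σ : ℝ, 0 < ρ ∧ 0 < σ ∧ |z| < ρ ∧ ρ < σ ∧ σ < r := by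
    have h00 := abs_nonneg z
    exact ⟨(2*|z|+r)/3, (|z|+2*r)/3, by linarith, by linarith, by linarith, by linarith,
      by linarith⟩
  obtain ⟨C, hC0, hC⟩ := exists_bound hconv hσ0 hσr
  have hσne : σ ≠ 0 := ne_of_gt hσ0
  have hq0 : 0 ≤ ρ/σ := div_nonneg hρ0.le hσ0.le
  have hq : ρ/σ < 1 := (div_lt_one hσ0).mpr hρσ
  have hu : Summable (fun n : ℕ => C/σ * ((n:ℝ) * (ρ/σ)^(n-1))) := by
    refine Summable.mul_left _ ?_
    refine (summable_nat_add_iff 1).mp ?_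
    exact (summable_mul_pow_geom hq0 hq).congr fun n => by
      push_cast [Nat.add_sub_cancel]; ring
  have hbound : ∀ (n : ℕ), ∀ y ∈ Set.Ioo (-ρ) ρ,
      ‖J n * ((n:ℝ) * y^(n-1))‖ ≤ C/σ * ((n:ℝ) * (ρ/σ)^(n-1)) := by
    intro n y hy
    have hy' : |y| ≤ ρ := le_of_lt (abs_lt.mpr ⟨hy.1, hy.2⟩)
    rw [Real.norm_eq_abs, abs_mul, abs_mul, abs_pow, Nat.abs_cast]
    match n with
    | 0 => simp
    | (m+1) =>
      have hJ : |J (m+1)| ≤ C / σ^(m+1) := by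
        rw [le_div_iff₀ (by positivity)]; exact hC (m+1)
      have h1 : |J (m+1)| * (((m+1:ℕ):ℝ) * |y|^((m+1)-1))
          ≤ (C / σ^(m+1)) * (((m:ℝ)+1) * ρ^m) := by
        push_cast [Nat.add_sub_cancel]
        have hyρ : |y|^m ≤ ρ^m := pow_le_pow_left₀ (abs_nonneg y) hy' m
        gcongr
      refine le_trans h1 (le_of_eq ?_)
      push_cast [Nat.add_sub_cancel]
      rw [div_pow, pow_succ]
      field_simp
  have hg0 : Summable (fun n : ℕ => J n * (0:ℝ)^n) := by
    refine summable_of_ne_finset_zero (s := {0}) fun n hn => ?_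
    have hn0 : n ≠ 0 := by simpa using hn
    simp [zero_pow hn0]
  have h0mem : (0:ℝ) ∈ Set.Ioo (-ρ) ρ := ⟨by linarith, by linarith⟩
  have hzmem : z ∈ Set.Ioo (-ρ) ρ := by
    have := abs_lt.mp hzρ; exact ⟨this.1, this.2⟩
  have key := hasDerivAt_tsum_of_isPreconnected hu (isOpen_Ioo (a := -ρ) (b := ρ))
    isPreconnected_Ioo
    (g := fun n y => J n * y^n) (g' := fun n y => J n * ((n:ℝ) * y^(n-1)))
    (fun n y _ => (hasDerivAt_pow n y).const_mul (J n))
    hbound h0mem hg0 hzmem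
  have hsum1 : Summable fun n : ℕ => (((n:ℝ)+1) * J (n+1)) * z^n := summable_K1 hconv hz
  have hsum0 : Summable fun n : ℕ => J n * ((n:ℝ) * z^(n-1)) := by
    refine (summable_nat_add_iff 1).mp (hsum1.congr fun n => ?_)
    push_cast [Nat.add_sub_cancel]
    ring
  have heq : ∑' n : ℕ, J n * ((n:ℝ) * z^(n-1))
      = ∑' n : ℕ, (((n:ℝ)+1) * J (n+1)) * z^n := by
    rw [Summable.tsum_eq_zero_add hsum0]
    simp only [Nat.cast_zero, zero_mul, mul_zero, zero_add]
    refine tsum_congr fun n => ?_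
    push_cast [Nat.add_sub_cancel]
    ring
  rw [← heq]
  exact key

/-- Uniqueness: a power series summing to `0` on a neighbourhood has zero coefficients. -/
lemma coeff_eq_zero {c : ℕ → ℝ} {ε : ℝ} (hε : 0 < ε)
    (h : ∀ z : ℝ, |z| < ε → HasSum (fun n => c n * z^n) 0) : ∀ n, c n = 0 := by
  set p := FormalMultilinearSeries.ofScalars ℝ c with hp
  obtain ⟨C, hC0, hC⟩ : ∃ C, 0 ≤ C ∧ ∀ n, |c n| * (ε/2)^n ≤ C :=
    exists_bound (r := ε) (fun z hz => (h z hz).summable) (by linarith) (by linarith)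
  have hrad : ENNReal.ofReal (ε/2) ≤ p.radius := by
    have h2 : ((ε/2).toNNReal : ℝ≥0∞) ≤ p.radius := by
      refine p.le_radius_of_bound C (r := (ε/2).toNNReal) fun n => ?_
      rw [hp, FormalMultilinearSeries.ofScalars_norm, Real.norm_eq_abs]
      have h3 : ((ε/2).toNNReal : ℝ) = ε/2 := Real.coe_toNNReal _ (by linarith)
      rw [h3]
      exact hC n
    exact h2
  have hball : HasFPowerSeriesOnBall (fun _ : ℝ => (0:ℝ)) p 0 (ENNReal.ofReal (ε/2)) := by
    refine ⟨hrad, ENNReal.ofReal_pos.mpr (by linarith), fun {y} hy => ?_⟩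
    have hy' : |y| < ε := by
      have h4 := EMetric.mem_ball.mp hy
      rw [edist_dist, ENNReal.ofReal_lt_ofReal_iff (by linarith)] at h4
      rw [Real.dist_eq, sub_zero] at h4
      linarith
    have h5 := h y hy'
    simp only [hp, FormalMultilinearSeries.ofScalars_apply_eq, smul_eq_mul]
    simpa using h5
  have hat : HasFPowerSeriesAt (fun _ : ℝ => (0:ℝ)) p 0 := ⟨_, hball⟩
  have hzero : p = 0 := HasFPowerSeriesAt.eq_zero hat
  intro n
  have h6 := (FormalMultilinearSeries.ofScalars_series_eq_zero (E := ℝ)).mp (hp ▸ hzero)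
  exact congrFun h6 n

/-- shift of a coefficient sequence: multiplication of the series by `z`. -/
def shf (c : ℕ → ℝ) : ℕ → ℝ := fun n => if n = 0 then 0 else c (n-1)

lemma summable_shf {c : ℕ → ℝ} {z : ℝ} (h : Summable fun n => c n * z^n) :
    Summable fun n => shf c n * z^n := by
  refine (summable_nat_add_iff 1).mp ((h.mul_right z).congr fun n => ?_)
  simp only [shf, Nat.add_sub_cancel, Nat.succ_ne_zero, if_false, pow_succ]
  ring

lemma hasSum_shf {c : ℕ → ℝ} {z : ℝ} (h : Summable fun n => c n * z^n) :
    HasSum (fun n => shf c n * z^n) (z * ∑' n, c n * z^n) := by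
  have hs := summable_shf (z := z) h
  have ht : ∑' n, shf c n * z^n = z * ∑' n, c n * z^n := by
    rw [Summable.tsum_eq_zero_add hs]
    have e0 : shf c 0 * z^0 = 0 := by simp [shf]
    rw [e0, zero_add,
      show (fun n : ℕ => shf c (n+1) * z^(n+1)) = fun n : ℕ => (c n * z^n) * z from
        funext fun n => by simp [shf, pow_succ]; ring, tsum_mul_right]
    ring
  exact ht ▸ hs.hasSum

end PartThree


end HeunAux

open HeunAux in
/-- **Proposition 1.** A power series solution `w(z) = ∑ Jₙ zⁿ` on
`(-r, r)` of the singly confluent Heun equation satisfies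
`w(z) = J₀ (1-z)⁻¹ ₂F₁(1/2,1/2;1;z/(z-1))` for `|z| < min r (1/2)`. -/
theorem heun_powerSeries_solution (r : ℝ) (hr0 : 0 < r)
    (J : ℕ → ℝ) (hconv : ∀ z : ℝ, |z| < r → Summable (fun n : ℕ => J n * z ^ n))
    (w : ℝ → ℝ) (hw : ∀ z : ℝ, |z| < r → w z = ∑' n : ℕ, J n * z ^ n)
    (hode : ∀ z ∈ Set.Ioo (-r) r,
      z * (1 - z) ^ 2 * deriv (deriv w) z
        + (1 - 3 * z) * (1 - z) * deriv w z + (z - 3 / 4) * w z = 0) :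
    ∀ z : ℝ, |z| < min r (1 / 2) →
      w z = J 0 * (1 - z)⁻¹ * twoF1 (1/2) (1/2) 1 (z / (z - 1)) := by
  classical
  set K1 : ℕ → ℝ := fun n => ((n:ℝ)+1) * J (n+1) with hK1
  set K2 : ℕ → ℝ := fun n => ((n:ℝ)+1) * K1 (n+1) with hK2
  have hconv1 : ∀ y : ℝ, |y| < r → Summable fun n => K1 n * y^n := fun y hy =>
    summable_K1 hconv hy
  have hconv2 : ∀ y : ℝ, |y| < r → Summable fun n => K2 n * y^n := fun y hy =>
    summable_K1 hconv1 hy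
  have hmemIoo : ∀ y : ℝ, |y| < r → y ∈ Set.Ioo (-r) r := fun y hy =>
    ⟨(abs_lt.mp hy).1, (abs_lt.mp hy).2⟩
  have hwd : ∀ y : ℝ, |y| < r → HasDerivAt w (∑' n, K1 n * y^n) y := by
    intro y hy
    have h1 : HasDerivAt (fun x => ∑' n, J n * x^n) (∑' n, K1 n * y^n) y :=
      hasDerivAt_tsum_pow hconv hy
    refine h1.congr_of_eventuallyEq ?_
    filter_upwards [(isOpen_Ioo).mem_nhds (hmemIoo y hy)] with t ht
    exact hw t (abs_lt.mpr ⟨ht.1, ht.2⟩)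
  have hderiv1 : ∀ y : ℝ, |y| < r → deriv w y = ∑' n, K1 n * y^n := fun y hy =>
    (hwd y hy).deriv
  have hw1d : ∀ y : ℝ, |y| < r → HasDerivAt (deriv w) (∑' n, K2 n * y^n) y := by
    intro y hy
    have h1 : HasDerivAt (fun x => ∑' n, K1 n * x^n) (∑' n, K2 n * y^n) y :=
      hasDerivAt_tsum_pow hconv1 hy
    refine h1.congr_of_eventuallyEq ?_
    filter_upwards [(isOpen_Ioo).mem_nhds (hmemIoo y hy)] with t ht
    exact hderiv1 t (abs_lt.mpr ⟨ht.1, ht.2⟩)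
  have hderiv2 : ∀ y : ℝ, |y| < r → deriv (deriv w) y = ∑' n, K2 n * y^n := fun y hy =>
    (hw1d y hy).deriv
  set Q : ℕ → ℝ := fun n => shf K2 n - 2 * shf (shf K2) n
    + shf (shf (shf K2)) n + K1 n - 4 * shf K1 n
    + 3 * shf (shf K1) n + shf J n - 3/4 * J n with hQdef
  have hQsum : ∀ y : ℝ, |y| < r → HasSum (fun n => Q n * y^n) 0 := by
    intro y hy
    have S0 := hconv y hy
    have S1 := hconv1 y hy
    have S2 := hconv2 y hy
    have s2a := summable_shf (z := y) S2
    have s2b := summable_shf (z := y) s2a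
    have s1a := summable_shf (z := y) S1
    have h2a := hasSum_shf (z := y) S2
    have h2b := hasSum_shf (z := y) s2a
    have h2c := hasSum_shf (z := y) s2b
    have h1a := hasSum_shf (z := y) S1
    have h1b := hasSum_shf (z := y) s1a
    have h0a := hasSum_shf (z := y) S0
    have e2a := h2a.tsum_eq
    rw [e2a] at h2b
    have e2b := h2b.tsum_eq
    rw [e2b] at h2c
    have e1a := h1a.tsum_eq
    rw [e1a] at h1b
    have H1 := (((((((h2a.sub (h2b.mul_left 2)).add h2c).add S1.hasSum).sub
      (h1a.mul_left 4)).add (h1b.mul_left 3)).add h0a).sub ((S0.hasSum).mul_left (3/4)))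
    have hode' := hode y (hmemIoo y hy)
    rw [hderiv2 y hy, hderiv1 y hy, hw y hy] at hode'
    convert H1 using 2
    · rfl
    · simp only [hQdef]; ring
    · linear_combination -hode'
  have hQ0 : ∀ n, Q n = 0 := coeff_eq_zero hr0 hQsum
  have svs : ∀ (c : ℕ → ℝ) (n : ℕ), shf c (n+1) = c n := fun c n => by
    simp [shf]
  have sv0 : ∀ (c : ℕ → ℝ), shf c 0 = 0 := fun c => by simp [shf]
  have hrec0 : J 1 = 3/4 * J 0 := by
    have h := hQ0 0
    simp only [hQdef, sv0, hK1] at h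
    push_cast at h
    linarith
  have hrec : ∀ m : ℕ, ((m:ℝ)+2)^2 * J (m+2)
      = (2*((m:ℝ)+1)^2 + 2*((m:ℝ)+1) + 3/4) * J (m+1) - ((m:ℝ)+1)^2 * J m := by
    intro m
    match m with
    | 0 =>
      have h := hQ0 (0+1)
      simp only [hQdef, svs, sv0, hK2, hK1] at h
      norm_num at h ⊢
      linarith
    | 1 =>
      have h := hQ0 (0+1+1)
      simp only [hQdef, svs, sv0, hK2, hK1] at h
      norm_num at h ⊢
      linarith
    | (t+2) =>
      have h := hQ0 (t+1+1+1)
      simp only [hQdef, svs, sv0, hK2, hK1] at h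
      rw [show t+1+1+1+1 = t+4 by omega, show t+1+1+1 = t+3 by omega,
        show t+1+1 = t+2 by omega] at h
      rw [show t+2+2 = t+4 by omega, show t+2+1 = t+3 by omega]
      push_cast at h ⊢
      linear_combination h
  have pair : ∀ n : ℕ, J n = J 0 * dd n ∧ J (n+1) = J 0 * dd (n+1) := by
    intro n
    induction n with
    | zero => exact ⟨by rw [dd_zero]; ring, by rw [dd_one, hrec0]; ring⟩
    | succ n ih =>
      refine ⟨ih.2, ?_⟩
      rw [show n+1+1 = n+2 from by omega]
      have h1 := hrec n
      have h2 := dd_rec n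
      have hne : (((n:ℝ))+2)^2 ≠ 0 := by positivity
      refine mul_left_cancel₀ hne ?_
      rw [h1, ih.1, ih.2]
      linear_combination (-(J 0)) * h2
  intro z hzmin
  have hzr : |z| < r := lt_of_lt_of_le hzmin (min_le_left _ _)
  have hz2 : |z| < 1/2 := lt_of_lt_of_le hzmin (min_le_right _ _)
  have hdd := hasSum_dd hz2
  rw [hw z hzr]
  have hsum : ∑' n, J n * z^n = J 0 * ∑' n, dd n * z^n := by
    rw [← tsum_mul_left]
    exact tsum_congr fun n => by rw [(pair n).1]; ring
  rw [hsum, hdd.tsum_eq, mul_assoc]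
end

section
/- (Clausen's identity.) For all real a > 0, b > 0 and all real x with |x| < 1, ₂F₁(a, b; a+b+1/2; x)² = ₃F₂(2a, 2b, a+b; 2a+2b, a+b+1/2; x). -/
/-- The generalized hypergeometric series `₃F₂(a₁,a₂,a₃;b₁,b₂;x)`. -/
noncomputable def threeF2 (a₁ a₂ a₃ b₁ b₂ x : ℝ) : ℝ :=
  ∑' n : ℕ, ((ascPochhammer ℝ n).eval a₁ * (ascPochhammer ℝ n).eval a₂ *
      (ascPochhammer ℝ n).eval a₃) /
    ((ascPochhammer ℝ n).eval b₁ * (ascPochhammer ℝ n).eval b₂ * (n.factorial : ℝ)) * x ^ n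

open Finset

@[simp]
theorem ordinaryHypergeometricCoefficient_zero {𝕂 : Type*} [Field 𝕂] (a b c : 𝕂) :
    ordinaryHypergeometricCoefficient a b c 0 = 1 := by
  simp [ordinaryHypergeometricCoefficient]

theorem ordinaryHypergeometricCoefficient_succ {𝕂 : Type*} [Field 𝕂] (a b c : 𝕂) (n : ℕ) :
    ordinaryHypergeometricCoefficient a b c (n + 1) =
      ordinaryHypergeometricCoefficient a b c n * ((a + n) * (b + n)) / ((n + 1) * (c + n)) := by
  simp only [ordinaryHypergeometricCoefficient, ascPochhammer_succ_eval, Nat.factorial_succ,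
    Nat.cast_mul, Nat.cast_succ, mul_inv, div_eq_mul_inv]
  ring

theorem twoF1_eq_tsum (a b c x : ℝ) :
    twoF1 a b c x = ∑' n, ordinaryHypergeometricCoefficient a b c n * x ^ n :=
  tsum_congr fun n => by ring

theorem summable_norm_ordinaryHypergeometricCoefficient_mul_pow {𝕂 : Type*} [RCLike 𝕂]
    {a b c x : 𝕂} (habc : ∀ k : ℕ, (k : 𝕂) ≠ -a ∧ (k : 𝕂) ≠ -b ∧ (k : 𝕂) ≠ -c) (hx : ‖x‖ < 1) :
    Summable fun n => ‖ordinaryHypergeometricCoefficient a b c n * x ^ n‖ := by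
  have hx' : x ∈ Metric.eball 0 (ordinaryHypergeometricSeries 𝕂 a b c).radius := by
    rw [ordinaryHypergeometricSeries_radius_eq_one (𝔸 := 𝕂) a b c habc]
    simpa [← ofReal_norm] using hx
  refine ((ordinaryHypergeometricSeries 𝕂 a b c).summable_norm_apply hx').congr fun n => ?_
  rw [ordinaryHypergeometricSeries_apply_eq, smul_eq_mul]

noncomputable def threeF2Coeff (a₁ a₂ a₃ b₁ b₂ : ℝ) (n : ℕ) : ℝ :=
  (ascPochhammer ℝ n).eval a₁ * (ascPochhammer ℝ n).eval a₂ * (ascPochhammer ℝ n).eval a₃ /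
    ((ascPochhammer ℝ n).eval b₁ * (ascPochhammer ℝ n).eval b₂ * (n.factorial : ℝ))

theorem threeF2_eq_tsum (a₁ a₂ a₃ b₁ b₂ x : ℝ) :
    threeF2 a₁ a₂ a₃ b₁ b₂ x = ∑' n, threeF2Coeff a₁ a₂ a₃ b₁ b₂ n * x ^ n :=
  rfl

@[simp]
theorem threeF2Coeff_zero (a₁ a₂ a₃ b₁ b₂ : ℝ) : threeF2Coeff a₁ a₂ a₃ b₁ b₂ 0 = 1 := by
  simp [threeF2Coeff]

theorem threeF2Coeff_succ (a₁ a₂ a₃ b₁ b₂ : ℝ) (n : ℕ) :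
    threeF2Coeff a₁ a₂ a₃ b₁ b₂ (n + 1) =
      threeF2Coeff a₁ a₂ a₃ b₁ b₂ n * ((a₁ + n) * (a₂ + n) * (a₃ + n)) /
        ((b₁ + n) * (b₂ + n) * (n + 1)) := by
  simp only [threeF2Coeff, ascPochhammer_succ_eval, Nat.factorial_succ, Nat.cast_mul,
    Nat.cast_succ, mul_inv, div_eq_mul_inv]
  ring

namespace Clausen

/-- Zeilberger's certificate for the summand `Aₖ Aₙ₋ₖ`; it depends on `a` and `b` only through
`s = a + b`. -/
noncomputable def certificate (s n k : ℝ) : ℝ :=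
  k * (1 - 3 * k + 2 * k ^ 2 + 3 / 2 * n - 3 * n * k - s - 3 * s * n - 2 * s ^ 2)

variable {a b : ℝ}

theorem certificate_step (hab : 0 < a + b) (k j : ℕ) :
    ((k + j + 1) * (a + b + 1/2 + (k + j)) * (2 * a + 2 * b + (k + j))) *
        (ordinaryHypergeometricCoefficient a b (a + b + 1/2) k *
          ordinaryHypergeometricCoefficient a b (a + b + 1/2) (j + 1)) -
      ((2 * a + (k + j)) * (2 * b + (k + j)) * (a + b + (k + j))) *
        (ordinaryHypergeometricCoefficient a b (a + b + 1/2) k *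
          ordinaryHypergeometricCoefficient a b (a + b + 1/2) j) =
    certificate (a + b) (k + j) (k + 1) *
        (ordinaryHypergeometricCoefficient a b (a + b + 1/2) (k + 1) *
          ordinaryHypergeometricCoefficient a b (a + b + 1/2) j) -
      certificate (a + b) (k + j) k *
        (ordinaryHypergeometricCoefficient a b (a + b + 1/2) k *
          ordinaryHypergeometricCoefficient a b (a + b + 1/2) (j + 1)) := by
  rw [ordinaryHypergeometricCoefficient_succ a b _ k,
    ordinaryHypergeometricCoefficient_succ a b _ j]
  have hk : a + b + 1/2 + k ≠ 0 := by positivity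
  have hj : a + b + 1/2 + j ≠ 0 := by positivity
  field_simp
  simp only [certificate]
  ring

theorem convolution_succ (hab : 0 < a + b) (n : ℕ) :
    ((n + 1) * (a + b + 1/2 + n) * (2 * a + 2 * b + n)) *
        ∑ k ∈ range (n + 2), ordinaryHypergeometricCoefficient a b (a + b + 1/2) k *
          ordinaryHypergeometricCoefficient a b (a + b + 1/2) (n + 1 - k) =
      ((2 * a + n) * (2 * b + n) * (a + b + n)) *
        ∑ k ∈ range (n + 1), ordinaryHypergeometricCoefficient a b (a + b + 1/2) k *
          ordinaryHypergeometricCoefficient a b (a + b + 1/2) (n - k) := by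
  have hstep := certificate_step hab
  have hα0 := ordinaryHypergeometricCoefficient_zero a b (a + b + 1/2)
  set α := ordinaryHypergeometricCoefficient a b (a + b + 1/2)
  clear_value α
  set G : ℕ → ℝ := fun k => certificate (a + b) n k * (α k * α (n + 1 - k))
  have hterm : ∀ k ∈ range (n + 1),
      ((n + 1) * (a + b + 1/2 + n) * (2 * a + 2 * b + n)) * (α k * α (n + 1 - k)) =
        ((2 * a + n) * (2 * b + n) * (a + b + n)) * (α k * α (n - k)) + (G (k + 1) - G k) := by
    intro k hk
    obtain ⟨j, rfl⟩ := Nat.exists_eq_add_of_le (Nat.lt_succ_iff.mp (mem_range.mp hk))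
    have e1 : k + j + 1 - k = j + 1 := by omega
    have e2 : k + j + 1 - (k + 1) = j := by omega
    simp only [G, e1, e2, Nat.add_sub_cancel_left, Nat.cast_add, Nat.cast_one]
    linear_combination hstep k j
  have hG0 : G 0 = 0 := by simp [G, certificate]
  have hGn : G (n + 1) = -((n + 1) * (a + b + 1/2 + n) * (2 * a + 2 * b + n)) * α (n + 1) := by
    simp only [G, Nat.sub_self, hα0, certificate, Nat.cast_add, Nat.cast_one]
    ring
  rw [sum_range_succ, mul_add, mul_sum, mul_sum, sum_congr rfl hterm, sum_add_distrib,
    sum_range_sub G, hG0, hGn, Nat.sub_self, hα0]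
  ring

theorem sum_range_mul_eq_threeF2Coeff (hab : 0 < a + b) (n : ℕ) :
    ∑ k ∈ range (n + 1), ordinaryHypergeometricCoefficient a b (a + b + 1/2) k *
        ordinaryHypergeometricCoefficient a b (a + b + 1/2) (n - k) =
      threeF2Coeff (2 * a) (2 * b) (a + b) (2 * a + 2 * b) (a + b + 1/2) n := by
  induction n with
  | zero => simp
  | succ n ih =>
    have h2ab : 0 < 2 * a + 2 * b := by linarith
    rw [threeF2Coeff_succ, ← ih, eq_div_iff (by positivity)]
    linear_combination convolution_succ hab n

end Clausen

/-- **Clausen's identity.**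
`₂F₁(a,b;a+b+1/2;x)² = ₃F₂(2a,2b,a+b;2a+2b,a+b+1/2;x)` for `a, b > 0`, `|x| < 1`. -/
theorem clausen_identity (a b x : ℝ) (ha : 0 < a) (hb : 0 < b) (hx : |x| < 1) :
    (twoF1 a b (a + b + 1/2) x) ^ 2
      = threeF2 (2 * a) (2 * b) (a + b) (2 * a + 2 * b) (a + b + 1/2) x := by
  have hpos : ∀ k : ℕ, (k : ℝ) ≠ -a ∧ (k : ℝ) ≠ -b ∧ (k : ℝ) ≠ -(a + b + 1/2) := fun k => by
    refine ⟨?_, ?_, ?_⟩ <;> linarith [k.cast_nonneg (α := ℝ)]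
  have hsum := summable_norm_ordinaryHypergeometricCoefficient_mul_pow hpos
    (by rwa [Real.norm_eq_abs])
  rw [twoF1_eq_tsum, threeF2_eq_tsum, sq,
    tsum_mul_tsum_eq_tsum_sum_range_of_summable_norm hsum hsum]
  refine tsum_congr fun n => ?_
  rw [← Clausen.sum_range_mul_eq_threeF2Coeff (by positivity) n, sum_mul]
  refine sum_congr rfl fun k hk => ?_
  rw [← pow_mul_pow_sub x (Nat.le_of_lt_succ (mem_range.mp hk))]
  ring
end

section
/- For every real x with 0 ≤ x < 1, ₃F₂(1/2, 1/2, 1/2; 1, 1; x) = ₂F₁(1/4, 1/4; 1; x)². -/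
/-- Coefficients of `₂F₁(1/4,1/4;1;x)`. -/
noncomputable def aC : ℕ → ℝ
  | 0 => 1
  | (k+1) => aC k * ((4*k+1)/(4*k+4))^2

/-- Coefficients of `₃F₂(1/2,1/2,1/2;1,1;x)`. -/
noncomputable def bC : ℕ → ℝ
  | 0 => 1
  | (n+1) => bC n * ((2*n+1)/(2*n+2))^3

lemma aC_pos (k : ℕ) : 0 < aC k := by
  induction k with
  | zero => norm_num [aC]
  | succ k ih =>
    rw [aC]
    positivity

lemma aC_le_one (k : ℕ) : aC k ≤ 1 := by
  induction k with
  | zero => norm_num [aC]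
  | succ k ih =>
    rw [aC]
    have h1 : ((4*(k:ℝ)+1)/(4*k+4))^2 ≤ 1 := by
      have h4 : (0:ℝ) < 4*k+4 := by positivity
      rw [div_pow, div_le_one (by positivity)]
      have : (4*(k:ℝ)+1) ≤ 4*k+4 := by linarith
      nlinarith [h4]
    nlinarith [aC_pos k, (aC_pos k).le, h1, sq_nonneg ((4*(k:ℝ)+1)/(4*k+4))]

lemma bC_pos (n : ℕ) : 0 < bC n := by
  induction n with
  | zero => norm_num [bC]
  | succ n ih =>
    rw [bC]
    positivity

/-- The WZ-style per-`k` certificate identity, with `R(n,k) = 8k²(2k-3(n+1))`. -/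
lemma per_k (n k : ℕ) (hk : k ≤ n) :
    8*((n:ℝ)+1)^3 * (aC k * aC (n+1-k)) - (2*n+1)^3 * (aC k * aC (n-k))
      = (8*((k:ℝ)+1)^2*(2*(k+1)-3*(n+1)) * (aC (k+1) * aC (n+1-(k+1))))
        - (8*(k:ℝ)^2*(2*k-3*(n+1)) * (aC k * aC (n+1-k))) := by
  have h1 : n + 1 - k = (n - k) + 1 := by omega
  have h2 : n + 1 - (k + 1) = n - k := by omega
  have hm : ((n - k : ℕ) : ℝ) = (n : ℝ) - k := by
    rw [Nat.cast_sub hk]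
  rw [h1, h2, aC, aC, hm]
  set m : ℝ := (n : ℝ) - k with hmdef
  set A : ℝ := aC k
  set C : ℝ := aC (n - k)
  have hk4 : (4*(k:ℝ)+4) ≠ 0 := by positivity
  have hm4 : (4*m+4) ≠ 0 := by
    have : (0:ℝ) ≤ m := by
      rw [hmdef]
      have := (Nat.cast_le (α := ℝ)).2 hk
      linarith
    positivity
  have hn : (n:ℝ) = m + k := by rw [hmdef]; ring
  rw [hn]
  have hm1 : m + 1 ≠ 0 := by intro h; apply hm4; linarith
  field_simp
  ring

/-- Telescoping: the key recurrence for the convolution. -/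
lemma conv_rec (n : ℕ) :
    8*((n:ℝ)+1)^3 * (∑ k ∈ Finset.range (n+2), aC k * aC (n+1-k))
      = (2*(n:ℝ)+1)^3 * (∑ k ∈ Finset.range (n+1), aC k * aC (n-k)) := by
  set H : ℕ → ℝ := fun k => 8*(k:ℝ)^2*(2*(k:ℝ)-3*((n:ℝ)+1)) * (aC k * aC (n+1-k)) with hH
  have tele : ∑ k ∈ Finset.range (n+1), (H (k+1) - H k) = H (n+1) - H 0 :=
    Finset.sum_range_sub H (n+1)
  have step : ∀ k ∈ Finset.range (n+1),
      8*((n:ℝ)+1)^3 * (aC k * aC (n+1-k)) - (2*(n:ℝ)+1)^3 * (aC k * aC (n-k))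
        = H (k+1) - H k := by
    intro k hk
    have hkn : k ≤ n := Nat.lt_succ_iff.mp (Finset.mem_range.mp hk)
    have hp := per_k n k hkn
    simp only [hH]
    push_cast
    push_cast at hp
    linarith
  have key : ∑ k ∈ Finset.range (n+1),
      (8*((n:ℝ)+1)^3 * (aC k * aC (n+1-k)) - (2*(n:ℝ)+1)^3 * (aC k * aC (n-k)))
        = H (n+1) - H 0 := by
    rw [Finset.sum_congr rfl step]; exact tele
  have hH1 : H (n+1) = -(8*((n:ℝ)+1)^3 * aC (n+1)) := by
    simp only [hH, Nat.add_sub_cancel, Nat.sub_self, show aC 0 = 1 from rfl, mul_one]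
    push_cast
    ring
  have hH0 : H 0 = 0 := by
    simp [hH]
  have expand : ∑ k ∈ Finset.range (n+1),
      (8*((n:ℝ)+1)^3 * (aC k * aC (n+1-k)) - (2*(n:ℝ)+1)^3 * (aC k * aC (n-k)))
      = 8*((n:ℝ)+1)^3 * (∑ k ∈ Finset.range (n+1), aC k * aC (n+1-k))
        - (2*(n:ℝ)+1)^3 * (∑ k ∈ Finset.range (n+1), aC k * aC (n-k)) := by
    rw [Finset.sum_sub_distrib, ← Finset.mul_sum, ← Finset.mul_sum]
  have last : ∑ k ∈ Finset.range (n+2), aC k * aC (n+1-k)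
      = (∑ k ∈ Finset.range (n+1), aC k * aC (n+1-k)) + aC (n+1) * aC 0 := by
    rw [Finset.sum_range_succ, Nat.sub_self]
  rw [expand, hH1, hH0] at key
  rw [last, show aC 0 = 1 from rfl, mul_one]
  linear_combination key

/-- The convolution identity: Cauchy product of `aC` with itself is `bC`. -/
lemma conv (n : ℕ) : ∑ k ∈ Finset.range (n+1), aC k * aC (n-k) = bC n := by
  induction n with
  | zero => simp [aC, bC]
  | succ n ih =>
    have hrec := conv_rec n
    rw [ih] at hrec
    rw [bC]
    have h8 : (8:ℝ)*((n:ℝ)+1)^3 ≠ 0 := by positivity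
    have : (8:ℝ)*((n:ℝ)+1)^3 * (bC n * ((2*(n:ℝ)+1)/(2*(n:ℝ)+2))^3)
        = (2*(n:ℝ)+1)^3 * bC n := by
      have h2 : (2*(n:ℝ)+2) ≠ 0 := by positivity
      field_simp
      ring
    have := hrec.trans this.symm
    exact mul_left_cancel₀ h8 (by rw [show ((n:ℕ)+1+1) = n+2 from rfl] at *; exact this)

lemma aC_eq (k : ℕ) :
    aC k = ((ascPochhammer ℝ k).eval (1/4) * (ascPochhammer ℝ k).eval (1/4)) /
      ((ascPochhammer ℝ k).eval 1 * (k.factorial : ℝ)) := by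
  induction k with
  | zero => simp [aC]
  | succ k ih =>
    rw [aC, ih, ascPochhammer_succ_eval, ascPochhammer_succ_eval, ascPochhammer_eval_one,
      Nat.factorial_succ]
    have hf : ((k.factorial : ℝ)) ≠ 0 := Nat.cast_ne_zero.mpr k.factorial_ne_zero
    have hk4 : (4*(k:ℝ)+4) ≠ 0 := by positivity
    push_cast
    field_simp
    ring

lemma bC_eq (n : ℕ) :
    bC n = ((ascPochhammer ℝ n).eval (1/2) * (ascPochhammer ℝ n).eval (1/2) *
      (ascPochhammer ℝ n).eval (1/2)) /
      ((ascPochhammer ℝ n).eval 1 * (ascPochhammer ℝ n).eval 1 * (n.factorial : ℝ)) := by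
  induction n with
  | zero => simp [bC]
  | succ n ih =>
    rw [bC, ih, ascPochhammer_succ_eval, ascPochhammer_succ_eval, ascPochhammer_eval_one,
      Nat.factorial_succ]
    have hf : ((n.factorial : ℝ)) ≠ 0 := Nat.cast_ne_zero.mpr n.factorial_ne_zero
    have h2 : (2*(n:ℝ)+2) ≠ 0 := by positivity
    push_cast
    field_simp
    ring

lemma summable_a (x : ℝ) (hx0 : 0 ≤ x) (hx1 : x < 1) :
    Summable (fun n : ℕ => ‖aC n * x ^ n‖) := by
  apply Summable.of_nonneg_of_le (fun n => norm_nonneg _)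
    (fun n => ?_) (summable_geometric_of_lt_one hx0 hx1)
  rw [Real.norm_eq_abs, abs_of_nonneg (mul_nonneg (aC_pos n).le (pow_nonneg hx0 n))]
  calc aC n * x ^ n ≤ 1 * x ^ n := by
        apply mul_le_mul_of_nonneg_right (aC_le_one n) (by positivity)
    _ = x ^ n := one_mul _

/-- The instance `a = b = 1/4` of Clausen's identity:
`₃F₂(1/2,1/2,1/2;1,1;x) = ₂F₁(1/4,1/4;1;x)²` for `0 ≤ x < 1`. -/
theorem threeF2_eq_twoF1_sq (x : ℝ) (hx0 : 0 ≤ x) (hx1 : x < 1) :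
    threeF2 (1/2) (1/2) (1/2) 1 1 x = (twoF1 (1/4) (1/4) 1 x) ^ 2 := by
  have hA : twoF1 (1/4) (1/4) 1 x = ∑' n : ℕ, aC n * x ^ n := by
    unfold twoF1
    exact tsum_congr fun n => by rw [aC_eq]
  have hB : threeF2 (1/2) (1/2) (1/2) 1 1 x = ∑' n : ℕ, bC n * x ^ n := by
    unfold threeF2
    exact tsum_congr fun n => by rw [bC_eq]
  rw [hA, hB, sq]
  rw [tsum_mul_tsum_eq_tsum_sum_range_of_summable_norm (summable_a x hx0 hx1)
    (summable_a x hx0 hx1)]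
  apply tsum_congr
  intro n
  symm
  calc ∑ k ∈ Finset.range (n+1), aC k * x ^ k * (aC (n-k) * x ^ (n-k))
      = ∑ k ∈ Finset.range (n+1), aC k * aC (n-k) * x ^ n := by
        apply Finset.sum_congr rfl
        intro k hk
        have hkn : k ≤ n := Nat.lt_succ_iff.mp (Finset.mem_range.mp hk)
        rw [show aC k * x ^ k * (aC (n-k) * x ^ (n-k)) = aC k * aC (n-k) * (x ^ k * x ^ (n-k))
          by ring, ← pow_add, Nat.add_sub_cancel' hkn]
    _ = bC n * x ^ n := by rw [← Finset.sum_mul, conv]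
end

section
/- For every a > 0, (1/π) · ∫₀¹ (1 + a²u)^{-1} · ₂F₁(1/2, 1/2; 1; a²u/(1 + a²u)) · (u(1-u))^{-1/2} du = (1 + a²)^{-1/2} · ₃F₂(1/2, 1/2, 1/2; 1, 1; a²/(1 + a²)). -/
open MeasureTheory Set

noncomputable def pochHalf (n : ℕ) : ℝ := (ascPochhammer ℝ n).eval (1/2 : ℝ)

lemma pochHalf_zero : pochHalf 0 = 1 := by simp [pochHalf, ascPochhammer_zero]

lemma pochHalf_succ (n : ℕ) : pochHalf (n+1) = pochHalf n * (1/2 + n) := by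
  simp [pochHalf, ascPochhammer_succ_eval]

lemma poch_one (n : ℕ) : (ascPochhammer ℝ n).eval (1:ℝ) = (n.factorial : ℝ) :=
  (Nat.cast_factorial ..).symm

lemma poch_pos (n : ℕ) : 0 < pochHalf n := by
  induction n with
  | zero => simp [pochHalf_zero]
  | succ n ih =>
    rw [pochHalf_succ]
    have : (0:ℝ) < 1/2 + n := by positivity
    positivity

lemma poch_le (n : ℕ) : pochHalf n ≤ (n.factorial : ℝ) := by
  induction n with
  | zero => simp [pochHalf_zero]
  | succ n ih =>
    rw [pochHalf_succ, Nat.factorial_succ]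
    push_cast
    have h1 : (1/2 : ℝ) + n ≤ (n:ℝ) + 1 := by linarith
    calc pochHalf n * (1/2 + (n:ℝ)) ≤ (n.factorial : ℝ) * ((n:ℝ) + 1) :=
          mul_le_mul ih h1 (by positivity) (le_trans (poch_pos n).le ih)
      _ = ((n:ℝ) + 1) * n.factorial := by ring

lemma gamma_half (n : ℕ) :
    Real.Gamma ((n:ℝ) + 1/2) = pochHalf n * Real.sqrt Real.pi := by
  induction n with
  | zero => simpa [pochHalf_zero] using Real.Gamma_one_half_eq
  | succ n ih =>
    have hne : ((n:ℝ) + 1/2) ≠ 0 := by positivity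
    have h : ((n+1:ℕ):ℝ) + 1/2 = ((n:ℝ) + 1/2) + 1 := by push_cast; ring
    rw [h, Real.Gamma_add_one hne, ih, pochHalf_succ]
    ring

lemma beta_eval (n : ℕ) :
    ∫ v in (0:ℝ)..1, v ^ ((n:ℝ) - 1/2) * (1-v) ^ (-(1/2):ℝ)
      = Real.pi * (pochHalf n / n.factorial) := by
  set I : ℝ := ∫ v in (0:ℝ)..1, v ^ ((n:ℝ) - 1/2) * (1-v) ^ (-(1/2):ℝ) with hI
  have hβ : Complex.betaIntegral (((n:ℝ) + 1/2 : ℝ):ℂ) ((1/2:ℝ):ℂ) = (I : ℂ) := by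
    rw [hI, Complex.betaIntegral, ← intervalIntegral.integral_ofReal]
    apply intervalIntegral.integral_congr
    intro x hx
    rw [uIcc_of_le (by norm_num : (0:ℝ) ≤ 1)] at hx
    have hx0 : (0:ℝ) ≤ x := hx.1
    have hx1 : (0:ℝ) ≤ 1 - x := by linarith [hx.2]
    have e1 : (((n:ℝ) + 1/2 : ℝ):ℂ) - 1 = (((n:ℝ) - 1/2 : ℝ):ℂ) := by push_cast; ring
    have e2 : ((1/2:ℝ):ℂ) - 1 = ((-(1/2):ℝ):ℂ) := by push_cast; ring
    simp only [e1, e2, Complex.ofReal_mul, Complex.ofReal_cpow hx0, Complex.ofReal_cpow hx1,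
      Complex.ofReal_sub, Complex.ofReal_one]
  have h1 : 0 < Complex.re (((n:ℝ) + 1/2 : ℝ):ℂ) := by
    rw [Complex.ofReal_re]; positivity
  have h2 : 0 < Complex.re ((1/2:ℝ):ℂ) := by rw [Complex.ofReal_re]; norm_num
  have key := Complex.Gamma_mul_Gamma_eq_betaIntegral h1 h2
  rw [hβ, Complex.Gamma_ofReal, Complex.Gamma_ofReal] at key
  have e3 : (((n:ℝ) + 1/2 : ℝ):ℂ) + ((1/2:ℝ):ℂ) = ((n:ℂ) + 1) := by push_cast; ring
  rw [e3, Complex.Gamma_nat_eq_factorial] at key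
  have key2 : (Real.Gamma ((n:ℝ) + 1/2) * Real.Gamma (1/2) : ℝ) = ((n.factorial : ℝ) * I : ℝ) := by
    have := key
    rw [← Complex.ofReal_mul] at this
    have hr : (((n.factorial : ℕ):ℂ) * (I:ℂ)) = (((n.factorial : ℝ) * I : ℝ):ℂ) := by push_cast; ring
    rw [hr] at this
    exact_mod_cast this
  rw [gamma_half, Real.Gamma_one_half_eq] at key2
  have hsq : Real.sqrt Real.pi * Real.sqrt Real.pi = Real.pi :=
    Real.mul_self_sqrt Real.pi_pos.le
  have hfac : (0:ℝ) < n.factorial := by exact_mod_cast n.factorial_pos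
  have h4 : pochHalf n * Real.pi = (n.factorial:ℝ) * I := by
    rw [← hsq]; nlinarith [key2]
  field_simp
  linarith [h4]

lemma beta_integrable (n : ℕ) :
    IntervalIntegrable (fun v : ℝ => v ^ ((n:ℝ) - 1/2) * (1-v) ^ (-(1/2):ℝ)) volume 0 1 := by
  have h1 : IntervalIntegrable (fun v : ℝ => v ^ ((n:ℝ) - 1/2) * (1-v) ^ (-(1/2):ℝ))
      volume 0 (1/2) := by
    apply IntervalIntegrable.mul_continuousOn
    · apply intervalIntegral.intervalIntegrable_rpow'
      have := n.cast_nonneg (α := ℝ); linarith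
    · apply ContinuousOn.rpow_const (by fun_prop)
      intro v hv
      rw [uIcc_of_le (by norm_num : (0:ℝ) ≤ 1/2)] at hv
      left; intro h; nlinarith [hv.2]
  have h2 : IntervalIntegrable (fun v : ℝ => v ^ ((n:ℝ) - 1/2) * (1-v) ^ (-(1/2):ℝ))
      volume (1/2) 1 := by
    apply IntervalIntegrable.continuousOn_mul
    · have := (intervalIntegral.intervalIntegrable_rpow'
        (r := (-(1/2):ℝ)) (a := (0:ℝ)) (b := 1/2) (by norm_num)).comp_sub_left 1
      norm_num at this
      exact this.symm
    · apply ContinuousOn.rpow_const (by fun_prop)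
      intro v hv
      rw [uIcc_of_le (by norm_num : (1/2:ℝ) ≤ 1)] at hv
      left; intro h; nlinarith [hv.1]
  exact h1.trans h2

/-- For `a > 0`,
`(1/π) ∫₀¹ (1+a²u)⁻¹ ₂F₁(1/2,1/2;1;a²u/(1+a²u)) (u(1-u))^{-1/2} du
  = (1+a²)^{-1/2} ₃F₂(1/2,1/2,1/2;1,1;a²/(1+a²))`. -/
theorem integral_eq_threeF2 (a : ℝ) (ha : 0 < a) :
    (1 / Real.pi) * ∫ u in (0:ℝ)..1, (1 + a ^ 2 * u)⁻¹ *
        twoF1 (1/2) (1/2) 1 (a ^ 2 * u / (1 + a ^ 2 * u)) * (u * (1 - u)) ^ (-(1/2) : ℝ)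
      = (1 + a ^ 2) ^ (-(1/2) : ℝ) *
          threeF2 (1/2) (1/2) (1/2) 1 1 (a ^ 2 / (1 + a ^ 2)) := by
  set A := a ^ 2 with hAdef
  have hA : 0 < A := by positivity
  have hA1 : (0:ℝ) < 1 + A := by linarith
  set x := A / (1 + A) with hxdef
  have hx0 : 0 < x := by positivity
  have hx1 : x < 1 := by rw [hxdef, div_lt_one hA1]; linarith
  set F : ℝ → ℝ := fun u => (1 + A * u)⁻¹ *
      twoF1 (1/2) (1/2) 1 (A * u / (1 + A * u)) * (u * (1 - u)) ^ (-(1/2) : ℝ) with hF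
  set φ : ℝ → ℝ := fun v => v / (1 + A * (1 - v)) with hφ
  have hd : ∀ v ∈ Ioo (0:ℝ) 1, 0 < 1 + A * (1 - v) := fun v hv => by nlinarith [hv.1, hv.2]
  have himg : φ '' Ioo 0 1 = Ioo (0:ℝ) 1 := by
    ext u
    simp only [mem_image, mem_Ioo]
    constructor
    · rintro ⟨v, ⟨hv1, hv2⟩, rfl⟩
      have hdv : 0 < 1 + A * (1 - v) := hd v ⟨hv1, hv2⟩
      constructor
      · exact div_pos hv1 hdv
      · rw [hφ]; simp only; rw [div_lt_one hdv]; nlinarith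
    · rintro ⟨hu1, hu2⟩
      have h1 : (0:ℝ) < 1 + A * u := by nlinarith
      refine ⟨u * (1 + A) / (1 + A * u), ⟨?_, ?_⟩, ?_⟩
      · positivity
      · rw [div_lt_one h1]; nlinarith
      · rw [hφ]; simp only
        have hden : 1 + A * (1 - u * (1 + A) / (1 + A * u)) = (1 + A) / (1 + A * u) := by
          field_simp; ring
        rw [hden]
        rw [div_div_div_cancel_right₀]
        · exact mul_div_cancel_right₀ u hA1.ne'
        · exact h1.ne'
  have hderiv : ∀ v ∈ Ioo (0:ℝ) 1,
      HasDerivWithinAt φ ((1 + A) / (1 + A * (1 - v)) ^ 2) (Ioo 0 1) v := by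
    intro v hv
    have hdv : 0 < 1 + A * (1 - v) := hd v hv
    have hden : HasDerivAt (fun y : ℝ => 1 + A * (1 - y)) (A * (-1)) v :=
      (((hasDerivAt_id v).const_sub 1).const_mul A).const_add 1
    have h1 : HasDerivAt φ
        ((1 * (1 + A * (1 - v)) - v * (A * (-1))) / (1 + A * (1 - v)) ^ 2) v :=
      (hasDerivAt_id v).div hden hdv.ne'
    have h2 : (1 * (1 + A * (1 - v)) - v * (A * (-1))) / (1 + A * (1 - v)) ^ 2
        = (1 + A) / (1 + A * (1 - v)) ^ 2 := by congr 1; ring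
    rw [h2] at h1
    exact h1.hasDerivWithinAt
  have hinj : InjOn φ (Ioo 0 1) := by
    intro v hv w hw h
    have hdv : 0 < 1 + A * (1 - v) := hd v hv
    have hdw : 0 < 1 + A * (1 - w) := hd w hw
    rw [hφ] at h; simp only at h
    rw [div_eq_div_iff hdv.ne' hdw.ne'] at h
    have h2 : (v - w) * (1 + A) = 0 := by linear_combination h
    rcases mul_eq_zero.mp h2 with h3 | h3
    · linarith
    · linarith
  have hcov : (∫ u in (0:ℝ)..1, F u)
      = ∫ v in Ioo (0:ℝ) 1, |(1 + A) / (1 + A * (1 - v)) ^ 2| • F (φ v) := by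
    have h := integral_image_eq_integral_abs_deriv_smul measurableSet_Ioo hderiv hinj F
    rw [himg] at h
    rw [intervalIntegral.integral_of_le zero_le_one, MeasureTheory.integral_Ioc_eq_integral_Ioo, h]
  set c : ℕ → ℝ := fun n => pochHalf n / n.factorial with hc
  have hc0 : ∀ n, 0 < c n := fun n => by
    have := poch_pos n
    have : (0:ℝ) < n.factorial := by exact_mod_cast n.factorial_pos
    positivity
  have hc1 : ∀ n, c n ≤ 1 := fun n => by
    have h1 : (0:ℝ) < n.factorial := by exact_mod_cast n.factorial_pos
    rw [hc, div_le_one h1]; exact poch_le n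
  set H : ℕ → ℝ → ℝ := fun n v => (1 + A) ^ (-(1/2) : ℝ) * ((c n)^2 * x^n) *
      (v ^ ((n:ℝ) - 1/2) * (1-v) ^ (-(1/2):ℝ)) with hH
  have hpt : ∀ v ∈ Ioo (0:ℝ) 1,
      |(1 + A) / (1 + A * (1 - v)) ^ 2| • F (φ v) = ∑' n, H n v := by
    rintro v ⟨hv1, hv2⟩
    have hv2' : (0:ℝ) < 1 - v := by linarith
    have hdv : 0 < 1 + A * (1 - v) := hd v ⟨hv1, hv2⟩
    set d := 1 + A * (1 - v) with hdd
    have hφv : φ v = v / d := rfl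
    have e1 : 1 + A * φ v = (1 + A) / d := by
      rw [hφv]; field_simp; ring
    have e2 : A * φ v / (1 + A * φ v) = x * v := by
      rw [e1, hφv, hxdef]; field_simp
    have e3 : φ v * (1 - φ v) = v * (1 - v) * ((1 + A) / d ^ 2) := by
      rw [hφv]; field_simp; ring
    have e4 : (d ^ 2 : ℝ) ^ (-(1/2) : ℝ) = d⁻¹ := by
      rw [← Real.rpow_natCast d 2, ← Real.rpow_mul hdv.le]
      norm_num [Real.rpow_neg_one]
    have e5 : (φ v * (1 - φ v)) ^ (-(1/2):ℝ)
        = (v * (1 - v)) ^ (-(1/2):ℝ) * ((1 + A) ^ (-(1/2):ℝ) * d) := by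
      rw [e3, Real.mul_rpow (by nlinarith) (by positivity),
        Real.div_rpow hA1.le (by positivity), e4]
      field_simp
    have e6 : (1 + A * φ v)⁻¹ = d / (1 + A) := by rw [e1]; field_simp
    have habs : |(1 + A) / d ^ 2| = (1 + A) / d ^ 2 := abs_of_pos (by positivity)
    rw [smul_eq_mul, habs, hF]
    simp only
    rw [e6, e2, e5]
    have e7 : (1 + A) / d ^ 2 * (d / (1 + A) * twoF1 (1/2) (1/2) 1 (x * v) *
        ((v * (1 - v)) ^ (-(1/2):ℝ) * ((1 + A) ^ (-(1/2):ℝ) * d)))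
        = (1 + A) ^ (-(1/2):ℝ) * (twoF1 (1/2) (1/2) 1 (x * v) * (v * (1 - v)) ^ (-(1/2):ℝ)) := by
      field_simp
    rw [e7, twoF1]
    simp only [poch_one]
    rw [← tsum_mul_right, ← tsum_mul_left]
    refine tsum_congr fun n => ?_
    have hfn : (0:ℝ) < n.factorial := by exact_mod_cast n.factorial_pos
    have hvmul : (v * (1 - v)) ^ (-(1/2):ℝ) = v ^ (-(1/2):ℝ) * (1 - v) ^ (-(1/2):ℝ) :=
      Real.mul_rpow hv1.le hv2'.le
    have hvp : v ^ ((n:ℝ) - 1/2) = v ^ (n:ℕ) * v ^ (-(1/2):ℝ) := by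
      rw [← Real.rpow_natCast v n, ← Real.rpow_add hv1]
      congr 1
    rw [hH, hc]
    simp only [pochHalf]
    rw [hvp, mul_pow, hvmul, div_pow]
    field_simp
  have hval : ∀ n : ℕ, ∫ v in Ioo (0:ℝ) 1, H n v
      = (1 + A) ^ (-(1/2) : ℝ) * (Real.pi * ((c n)^3 * x^n)) := by
    intro n
    rw [hH]; simp only
    rw [MeasureTheory.integral_const_mul, ← MeasureTheory.integral_Ioc_eq_integral_Ioo,
      ← intervalIntegral.integral_of_le zero_le_one, beta_eval]
    simp only [hc]
    ring
  have hHint : ∀ n : ℕ, MeasureTheory.IntegrableOn (H n) (Ioo (0:ℝ) 1) := by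
    intro n
    have h1 : MeasureTheory.IntegrableOn
        (fun v : ℝ => v ^ ((n:ℝ) - 1/2) * (1-v) ^ (-(1/2):ℝ)) (Ioo (0:ℝ) 1) := by
      have h2 := (intervalIntegrable_iff_integrableOn_Ioc_of_le
        (zero_le_one (α := ℝ))).mp (beta_integrable n)
      exact h2.mono_set Ioo_subset_Ioc_self
    have h3 := h1.const_mul ((1 + A) ^ (-(1/2):ℝ) * ((c n)^2 * x^n))
    exact h3
  have hswap : ∫ v in Ioo (0:ℝ) 1, ∑' n, H n v = ∑' n, ∫ v in Ioo (0:ℝ) 1, H n v := by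
    refine (MeasureTheory.integral_tsum_of_summable_integral_norm hHint ?_).symm
    have heq : ∀ n : ℕ, (∫ v in Ioo (0:ℝ) 1, ‖H n v‖)
        = (1 + A) ^ (-(1/2):ℝ) * (Real.pi * ((c n)^3 * x^n)) := by
      intro n
      rw [← hval n]
      apply MeasureTheory.setIntegral_congr_fun measurableSet_Ioo
      rintro v ⟨hv1, hv2⟩
      show ‖H n v‖ = H n v
      rw [Real.norm_eq_abs, abs_of_nonneg]
      rw [hH]; simp only
      have h1 : (0:ℝ) ≤ v ^ ((n:ℝ) - 1/2) := Real.rpow_nonneg hv1.le _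
      have h2 : (0:ℝ) ≤ (1-v) ^ (-(1/2):ℝ) := Real.rpow_nonneg (by linarith) _
      have h3 := (hc0 n).le
      positivity
    rw [funext heq]
    refine Summable.mul_left _ (Summable.mul_left _ ?_)
    refine Summable.of_nonneg_of_le (fun n => by have := (hc0 n).le; positivity)
      (fun n => ?_) (summable_geometric_of_lt_one hx0.le hx1)
    calc (c n)^3 * x^n ≤ 1^3 * x^n := by
          have := (hc0 n).le; have := hc1 n
          gcongr
      _ = x^n := by ring
  have h3F2 : threeF2 (1/2) (1/2) (1/2) 1 1 x = ∑' n, (c n)^3 * x^n := by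
    rw [threeF2]
    refine tsum_congr fun n => ?_
    have hfn : (0:ℝ) < n.factorial := by exact_mod_cast n.factorial_pos
    rw [poch_one]
    simp only [hc, pochHalf]
    rw [div_pow]
    congr 1
    field_simp
  have hint : (∫ u in (0:ℝ)..1, F u)
      = (1 + A) ^ (-(1/2) : ℝ) * Real.pi * ∑' n, (c n)^3 * x^n := by
    rw [hcov, MeasureTheory.setIntegral_congr_fun measurableSet_Ioo hpt, hswap]
    simp_rw [hval]
    rw [tsum_mul_left, tsum_mul_left, ← mul_assoc]
  rw [hint, h3F2]
  have hπ : Real.pi ≠ 0 := Real.pi_ne_zero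
  field_simp
end

section
/- (Main Theorem.) Let 0 < a < 1 and let (Jₙ)_{n≥0} be a real sequence such that ∑_{n=0}^∞ |Jₙ| a^{2n} < ∞, the power series w(z) = ∑_{n=0}^∞ Jₙ zⁿ converges for |z| ≤ a², w satisfies z(1-z)²·w''(z) + (1-3z)(1-z)·w'(z) + (z - 3/4)·w(z) = 0 on a neighborhood of 0, and J₀ = π²/2. Then (1/J₀) · ∑_{n=0}^∞ (-1)ⁿ · (C(2n,n)/4ⁿ) · a^{2n} · Jₙ = ₂F₁(1/4, 3/4; 1; -a²)². -/
open PowerSeries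


open FormalMultilinearSeries

private lemma coeff_ofScalars {c : ℕ → ℝ} {n : ℕ} :
    (FormalMultilinearSeries.ofScalars ℝ c).coeff n = c n := by
  show (FormalMultilinearSeries.ofScalars ℝ c) n (fun _ => (1:ℝ)) = c n
  rw [FormalMultilinearSeries.ofScalars_apply_eq]
  simp

private lemma hasFPS_of_hasSum {f : ℝ → ℝ} {c : ℕ → ℝ}
    (h : ∀ᶠ z in nhds (0:ℝ), HasSum (fun n => c n * z ^ n) (f z)) :
    HasFPowerSeriesAt f (FormalMultilinearSeries.ofScalars ℝ c) 0 := by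
  rw [hasFPowerSeriesAt_iff]
  filter_upwards [h] with z hz
  have h2 : (fun n => z ^ n • (FormalMultilinearSeries.ofScalars ℝ c).coeff n)
      = fun n => c n * z ^ n := by
    funext n; rw [coeff_ofScalars, smul_eq_mul, mul_comm]
  rw [h2, zero_add]
  exact hz

private lemma hasSum_of_hasFPS {f : ℝ → ℝ} {c : ℕ → ℝ}
    (h : HasFPowerSeriesAt f (FormalMultilinearSeries.ofScalars ℝ c) 0) :
    ∀ᶠ z in nhds (0:ℝ), HasSum (fun n => c n * z ^ n) (f z) := by
  filter_upwards [hasFPowerSeriesAt_iff.mp h] with z hz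
  have h2 : (fun n => z ^ n • (FormalMultilinearSeries.ofScalars ℝ c).coeff n)
      = fun n => c n * z ^ n := by
    funext n; rw [coeff_ofScalars, smul_eq_mul, mul_comm]
  rw [h2, zero_add] at hz
  exact hz

private lemma hasFPS_deriv {f : ℝ → ℝ} {c : ℕ → ℝ}
    (h : HasFPowerSeriesAt f (FormalMultilinearSeries.ofScalars ℝ c) 0) :
    HasFPowerSeriesAt (deriv f)
      (FormalMultilinearSeries.ofScalars ℝ (fun n => ((n:ℝ)+1) * c (n+1))) 0 := by
  obtain ⟨r, hr⟩ := h
  have hd := hr.fderiv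
  set A : (ℝ →L[ℝ] ℝ) →L[ℝ] ℝ := ContinuousLinearMap.apply ℝ ℝ (1:ℝ) with hA_def
  have hA := A.comp_hasFPowerSeriesOnBall hd
  have heq : A ∘ (fderiv ℝ f) = deriv f := by
    funext z
    simp only [Function.comp_apply, hA_def, ContinuousLinearMap.apply_apply]
    exact fderiv_apply_one_eq_deriv
  rw [heq] at hA
  apply hasFPS_of_hasSum
  have hcoeff : ∀ n : ℕ,
      (A.compFormalMultilinearSeries
        ((FormalMultilinearSeries.ofScalars ℝ c).derivSeries)).coeff n = ((n:ℝ)+1) * c (n+1) := by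
    intro n
    have hd := FormalMultilinearSeries.derivSeries_apply_diag
      (p := FormalMultilinearSeries.ofScalars ℝ c) n (1:ℝ)
    show A (((FormalMultilinearSeries.ofScalars ℝ c).derivSeries) n fun _ => (1:ℝ)) = _
    rw [ContinuousLinearMap.apply_apply, hd, FormalMultilinearSeries.ofScalars_apply_eq]
    simp [smul_eq_mul]
  filter_upwards [hasFPowerSeriesAt_iff.mp hA.hasFPowerSeriesAt] with z hz
  have h2 : (fun n => z ^ n •
      (A.compFormalMultilinearSeries
        ((FormalMultilinearSeries.ofScalars ℝ c).derivSeries)).coeff n)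
      = fun (n : ℕ) => (((n:ℝ)+1) * c (n+1)) * z ^ n := by
    funext n; rw [hcoeff n, smul_eq_mul, mul_comm]
  rw [h2, zero_add] at hz
  exact hz

private noncomputable def sh (c : ℕ → ℝ) : ℕ → ℝ
  | 0 => 0
  | n+1 => c n

private lemma hasSum_sh {c : ℕ → ℝ} {z S : ℝ} (h : HasSum (fun n => c n * z ^ n) S) :
    HasSum (fun n => sh c n * z ^ n) (z * S) := by
  have h1 : HasSum (fun n => sh c (n+1) * z ^ (n+1)) (z * S) := by
    have h2 : HasSum (fun i => z * (c i * z ^ i)) (z * S) := h.mul_left z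
    convert h2 using 2 with n
    show sh c (n+1) * z ^ (n+1) = z * (c n * z ^ n)
    simp only [sh]
    ring
  have h3 := (hasSum_nat_add_iff (f := fun n => sh c n * z ^ n) 1).mp h1
  simpa [sh] using h3

private noncomputable def cc1 (J : ℕ → ℝ) : ℕ → ℝ := fun n => ((n:ℝ)+1) * J (n+1)
private noncomputable def cc2 (J : ℕ → ℝ) : ℕ → ℝ := fun n => ((n:ℝ)+1) * cc1 J (n+1)
private noncomputable def Rf (J : ℕ → ℝ) : ℕ → ℝ := fun n =>
  (sh (cc2 J) n + (-2) * sh (sh (cc2 J)) n + sh (sh (sh (cc2 J))) n)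
  + (cc1 J n + (-4) * sh (cc1 J) n + 3 * sh (sh (cc1 J)) n)
  + (sh J n + (-3/4) * J n)

private lemma rf_zero {J : ℕ → ℝ} {w : ℝ → ℝ}
    (hw0 : HasFPowerSeriesAt w (FormalMultilinearSeries.ofScalars ℝ J) 0)
    (hode : ∀ᶠ z in nhds (0 : ℝ),
      z * (1 - z) ^ 2 * deriv (deriv w) z
        + (1 - 3 * z) * (1 - z) * deriv w z + (z - 3 / 4) * w z = 0) :
    ∀ n, Rf J n = 0 := by
  have h1 : HasFPowerSeriesAt (deriv w) (FormalMultilinearSeries.ofScalars ℝ (cc1 J)) 0 :=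
    hasFPS_deriv hw0
  have h2 : HasFPowerSeriesAt (deriv (deriv w))
      (FormalMultilinearSeries.ofScalars ℝ (cc2 J)) 0 :=
    hasFPS_deriv h1
  have key : ∀ᶠ z in nhds (0:ℝ), HasSum (fun n => Rf J n * z ^ n) ((fun _ => (0:ℝ)) z) := by
    filter_upwards [hasSum_of_hasFPS hw0, hasSum_of_hasFPS h1, hasSum_of_hasFPS h2, hode] with
      z s0 s1 s2 hz
    have t1 := hasSum_sh s2
    have t2 := hasSum_sh t1
    have t3 := hasSum_sh t2
    have u1 := hasSum_sh s1
    have u2 := hasSum_sh u1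
    have v1 := hasSum_sh s0
    have big := ((t1.add ((t2.mul_left (-2)).add t3)).add
      (s1.add ((u1.mul_left (-4)).add (u2.mul_left 3)))).add
      (v1.add (s0.mul_left (-3/4)))
    convert big using 1
    · funext n
      simp only [Rf]
      ring
    · linear_combination -hz
  have hz0 := hasFPS_of_hasSum key
  have h0 : (fun _ : ℝ => (0:ℝ)) = (0 : ℝ → ℝ) := rfl
  rw [h0] at hz0
  have hps := hz0.eq_zero
  intro n
  have hn := congrFun hps n
  exact (FormalMultilinearSeries.ofScalars_eq_zero (E := ℝ) (c := Rf J) n).mp (by rw [hps]; rfl)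


private noncomputable def fc : ℕ → ℝ
  | 0 => 1
  | n+1 => fc n * (((n:ℝ)+1/4) * ((n:ℝ)+3/4)) / ((n:ℝ)+1)^2

private lemma fc_rec (n : ℕ) :
    ((n:ℝ)+1)^2 * fc (n+1) = ((n:ℝ)+1/4)*((n:ℝ)+3/4) * fc n := by
  have h : ((n:ℝ)+1)^2 ≠ 0 := by positivity
  show ((n:ℝ)+1)^2 * (fc n * (((n:ℝ)+1/4) * ((n:ℝ)+3/4)) / ((n:ℝ)+1)^2) = _
  field_simp

private noncomputable def dd (n : ℕ) : ℝ := ∑ k ∈ Finset.range (n+1), fc k * fc (n-k)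

private noncomputable def Fps : ℝ⟦X⟧ := PowerSeries.mk fc
private noncomputable def Dp1 : ℝ⟦X⟧ := PowerSeries.derivative ℝ Fps
private noncomputable def Dp2 : ℝ⟦X⟧ := PowerSeries.derivative ℝ Dp1
private noncomputable def Dp3 : ℝ⟦X⟧ := PowerSeries.derivative ℝ Dp2
private noncomputable def Yps : ℝ⟦X⟧ := Fps * Fps
private noncomputable def Yp1 : ℝ⟦X⟧ := PowerSeries.derivative ℝ Yps
private noncomputable def Yp2 : ℝ⟦X⟧ := PowerSeries.derivative ℝ Yp1
private noncomputable def Yp3 : ℝ⟦X⟧ := PowerSeries.derivative ℝ Yp2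

private lemma czk {S : ℝ⟦X⟧} {k m : ℕ} (h : m < k) : coeff m (S * X^k) = 0 := by
  rw [PowerSeries.coeff_mul_X_pow', if_neg (by omega)]

private lemma cFps (n : ℕ) : coeff n Fps = fc n := coeff_mk n fc

private lemma cDp1 (n : ℕ) : coeff n Dp1 = fc (n+1) * ((n:ℝ)+1) := by
  rw [Dp1, coeff_derivative, cFps]

private lemma cDp2 (n : ℕ) : coeff n Dp2 = fc (n+2) * ((n:ℝ)+2) * ((n:ℝ)+1) := by
  rw [Dp2, coeff_derivative, cDp1 (n+1)]
  push_cast; ring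

private lemma cDp3 (n : ℕ) :
    coeff n Dp3 = fc (n+3) * ((n:ℝ)+3) * ((n:ℝ)+2) * ((n:ℝ)+1) := by
  rw [Dp3, coeff_derivative, cDp2 (n+1)]
  push_cast; ring

private lemma hEq1 :
    (16:ℝ⟦X⟧) * (Dp2*X^1 - Dp2*X^2 + Dp1 - 2*(Dp1*X^1)) = 3 * Fps := by
  have h16 : (16:ℝ⟦X⟧) = C 16 := (map_ofNat (C (R := ℝ)) 16).symm
  have h3 : (3:ℝ⟦X⟧) = C 3 := (map_ofNat (C (R := ℝ)) 3).symm
  have h2 : (2:ℝ⟦X⟧) = C 2 := (map_ofNat (C (R := ℝ)) 2).symm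
  ext n
  rw [h16, h3, h2, coeff_C_mul, coeff_C_mul]
  match n with
  | 0 =>
    rw [map_sub, map_add, map_sub]
    rw [czk (by norm_num), czk (by norm_num), coeff_C_mul, czk (by norm_num)]
    rw [cDp1 0, cFps]
    have := fc_rec 0
    push_cast at this ⊢
    norm_num at this ⊢
    linarith
  | 1 =>
    rw [map_sub, map_add, map_sub]
    rw [show coeff 1 (Dp2 * X^1) = coeff 0 Dp2 from PowerSeries.coeff_mul_X_pow Dp2 1 0,
      czk (by norm_num), coeff_C_mul,
      show coeff 1 (Dp1 * X^1) = coeff 0 Dp1 from PowerSeries.coeff_mul_X_pow Dp1 1 0]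
    rw [cDp2 0, cDp1 1, cDp1 0, cFps]
    have := fc_rec 1
    push_cast at this ⊢
    norm_num at this ⊢
    linarith
  | (m+2) =>
    rw [map_sub, map_add, map_sub]
    rw [show PowerSeries.coeff (m+2) (Dp2 * X^1) = PowerSeries.coeff (m+1) Dp2 from
        PowerSeries.coeff_mul_X_pow Dp2 1 (m+1),
      show PowerSeries.coeff (m+2) (Dp2 * X^2) = PowerSeries.coeff m Dp2 from PowerSeries.coeff_mul_X_pow Dp2 2 m,
      coeff_C_mul,
      show PowerSeries.coeff (m+2) (Dp1 * X^1) = PowerSeries.coeff (m+1) Dp1 from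
        PowerSeries.coeff_mul_X_pow Dp1 1 (m+1)]
    rw [cDp2 (m+1), cDp2 m, cDp1 (m+2), cDp1 (m+1), cFps]
    have h1 := fc_rec (m+2)
    push_cast at h1 ⊢
    linear_combination 16 * h1

private lemma hEq2 :
    (16:ℝ⟦X⟧) * (Dp3*X^1 - Dp3*X^2 + 2*Dp2 - 4*(Dp2*X^1)) = 35 * Dp1 := by
  have h16 : (16:ℝ⟦X⟧) = C 16 := (map_ofNat (C (R := ℝ)) 16).symm
  have h35 : (35:ℝ⟦X⟧) = C 35 := (map_ofNat (C (R := ℝ)) 35).symm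
  have h2 : (2:ℝ⟦X⟧) = C 2 := (map_ofNat (C (R := ℝ)) 2).symm
  have h4 : (4:ℝ⟦X⟧) = C 4 := (map_ofNat (C (R := ℝ)) 4).symm
  ext n
  rw [h16, h35, h2, h4, coeff_C_mul, coeff_C_mul]
  match n with
  | 0 =>
    rw [map_sub, map_add, map_sub]
    rw [czk (by norm_num), czk (by norm_num), coeff_C_mul, coeff_C_mul, czk (by norm_num)]
    rw [cDp2 0, cDp1 0]
    have := fc_rec 1
    push_cast at this ⊢
    norm_num at this ⊢
    linarith
  | 1 =>
    rw [map_sub, map_add, map_sub]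
    rw [show coeff 1 (Dp3 * X^1) = coeff 0 Dp3 from PowerSeries.coeff_mul_X_pow Dp3 1 0,
      czk (by norm_num), coeff_C_mul, coeff_C_mul,
      show coeff 1 (Dp2 * X^1) = coeff 0 Dp2 from PowerSeries.coeff_mul_X_pow Dp2 1 0]
    rw [cDp3 0, cDp2 1, cDp2 0, cDp1 1]
    have := fc_rec 2
    push_cast at this ⊢
    norm_num at this ⊢
    linarith
  | (m+2) =>
    rw [map_sub, map_add, map_sub]
    rw [show PowerSeries.coeff (m+2) (Dp3 * X^1) = PowerSeries.coeff (m+1) Dp3 from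
        PowerSeries.coeff_mul_X_pow Dp3 1 (m+1),
      show PowerSeries.coeff (m+2) (Dp3 * X^2) = PowerSeries.coeff m Dp3 from PowerSeries.coeff_mul_X_pow Dp3 2 m,
      coeff_C_mul, coeff_C_mul,
      show PowerSeries.coeff (m+2) (Dp2 * X^1) = PowerSeries.coeff (m+1) Dp2 from
        PowerSeries.coeff_mul_X_pow Dp2 1 (m+1)]
    rw [cDp3 (m+1), cDp3 m, cDp2 (m+2), cDp2 (m+1), cDp1 (m+2)]
    have h1 := fc_rec (m+3)
    push_cast at h1 ⊢
    linear_combination (16*((m:ℝ)+3)) * h1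

private lemma hD1 : PowerSeries.derivative ℝ Fps = Dp1 := rfl
private lemma hD2 : PowerSeries.derivative ℝ Dp1 = Dp2 := rfl
private lemma hD3 : PowerSeries.derivative ℝ Dp2 = Dp3 := rfl

private lemma hYp1 : Yp1 = Fps*Dp1 + Fps*Dp1 := by
  rw [Yp1, Yps]
  simp only [Derivation.leibniz, smul_eq_mul, hD1]

private lemma hYp2 : Yp2 = (Fps*Dp2 + Dp1*Dp1) + (Fps*Dp2 + Dp1*Dp1) := by
  rw [Yp2, hYp1]
  simp only [map_add, Derivation.leibniz, smul_eq_mul, hD1, hD2]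

private lemma hYp3 :
    Yp3 = ((Fps*Dp3 + Dp2*Dp1) + (Dp1*Dp2 + Dp1*Dp2))
        + ((Fps*Dp3 + Dp2*Dp1) + (Dp1*Dp2 + Dp1*Dp2)) := by
  rw [Yp3, hYp2]
  simp only [map_add, Derivation.leibniz, smul_eq_mul, hD1, hD2, hD3]

private lemma hMC :
    32*(Yp3*X^2) - 64*(Yp3*X^3) + 32*(Yp3*X^4) + 96*(Yp2*X^1) - 288*(Yp2*X^2)
      + 192*(Yp2*X^3) + 32*Yp1 - 216*(Yp1*X^1) + 216*(Yp1*X^2) - 12*Yps + 24*(Yps*X^1)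
      = 0 := by
  rw [hYp3, hYp2, hYp1, Yps]
  linear_combination (12*(X*Dp1) - 12*(X^2*Dp1) + 4*Fps - 8*(X*Fps)) * hEq1
    + (4*(X*Fps) - 4*(X^2*Fps)) * hEq2

private lemma cYps (n : ℕ) : coeff n Yps = dd n := by
  rw [Yps, Fps, PowerSeries.coeff_mul, dd, Finset.Nat.sum_antidiagonal_eq_sum_range_succ_mk]
  simp [coeff_mk]

private lemma cYp1 (n : ℕ) : coeff n Yp1 = dd (n+1) * ((n:ℝ)+1) := by
  rw [Yp1, coeff_derivative, cYps]

private lemma cYp2 (n : ℕ) : coeff n Yp2 = dd (n+2) * ((n:ℝ)+2) * ((n:ℝ)+1) := by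
  rw [Yp2, coeff_derivative, cYp1]
  push_cast; ring

private lemma cYp3 (n : ℕ) :
    coeff n Yp3 = dd (n+3) * ((n:ℝ)+3) * ((n:ℝ)+2) * ((n:ℝ)+1) := by
  rw [Yp3, coeff_derivative, cYp2]
  push_cast; ring

private lemma fc0 : fc 0 = 1 := rfl
private lemma fc1 : fc 1 = 3/16 := by
  have h := fc_rec 0
  rw [fc0] at h
  norm_num at h
  linarith
private lemma fc2 : fc 2 = 105/1024 := by
  have h := fc_rec 1
  rw [fc1] at h
  norm_num at h
  linarith
private lemma fc3 : fc 3 = 1155/16384 := by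
  have h := fc_rec 2
  rw [fc2] at h
  norm_num at h
  linarith
private lemma fc4 : fc 4 = 225225/4194304 := by
  have h := fc_rec 3
  rw [fc3] at h
  norm_num at h
  linarith

private lemma dd0 : dd 0 = 1 := by
  simp [dd, fc0]
private lemma dd1 : dd 1 = 3/8 := by
  rw [dd]
  simp [Finset.sum_range_succ, fc0, fc1]
  norm_num
private lemma dd2 : dd 2 = 123/512 := by
  rw [dd]
  simp [Finset.sum_range_succ, fc0, fc1, fc2]
  norm_num
private lemma dd3 : dd 3 = 735/4096 := by
  rw [dd]
  simp [Finset.sum_range_succ, fc0, fc1, fc2, fc3]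
  norm_num
private lemma dd4 : dd 4 = 302715/2097152 := by
  rw [dd]
  simp [Finset.sum_range_succ, fc0, fc1, fc2, fc3, fc4]
  norm_num

private lemma dd_rec (n : ℕ) :
    ((n:ℝ)+2)^3 * dd (n+2)
      = (2*((n:ℝ)+1)^3+3*((n:ℝ)+1)^2+(7/4)*((n:ℝ)+1)+3/8) * dd (n+1)
        - (((n:ℝ)+1)^3 - ((n:ℝ)+1)/4) * dd n := by
  match n with
  | 0 => rw [dd2, dd1, dd0]; norm_num
  | 1 => rw [dd3, dd2, dd1]; push_cast; norm_num
  | 2 => rw [dd4, dd3, dd2]; push_cast; norm_num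
  | (m+3) =>
    have h := congrArg (coeff (R := ℝ) (m+4)) hMC
    rw [show (32:ℝ⟦X⟧) = C 32 from (map_ofNat (C (R := ℝ)) 32).symm,
      show (64:ℝ⟦X⟧) = C 64 from (map_ofNat (C (R := ℝ)) 64).symm,
      show (96:ℝ⟦X⟧) = C 96 from (map_ofNat (C (R := ℝ)) 96).symm,
      show (288:ℝ⟦X⟧) = C 288 from (map_ofNat (C (R := ℝ)) 288).symm,
      show (192:ℝ⟦X⟧) = C 192 from (map_ofNat (C (R := ℝ)) 192).symm,
      show (216:ℝ⟦X⟧) = C 216 from (map_ofNat (C (R := ℝ)) 216).symm,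
      show (12:ℝ⟦X⟧) = C 12 from (map_ofNat (C (R := ℝ)) 12).symm,
      show (24:ℝ⟦X⟧) = C 24 from (map_ofNat (C (R := ℝ)) 24).symm] at h
    simp only [map_sub, map_add, map_zero, coeff_C_mul] at h
    rw [show PowerSeries.coeff (m+4) (Yp3*X^2) = PowerSeries.coeff (m+2) Yp3 from
        PowerSeries.coeff_mul_X_pow Yp3 2 (m+2),
      show PowerSeries.coeff (m+4) (Yp3*X^3) = PowerSeries.coeff (m+1) Yp3 from
        PowerSeries.coeff_mul_X_pow Yp3 3 (m+1),
      show PowerSeries.coeff (m+4) (Yp3*X^4) = PowerSeries.coeff m Yp3 from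
        PowerSeries.coeff_mul_X_pow Yp3 4 m,
      show PowerSeries.coeff (m+4) (Yp2*X^1) = PowerSeries.coeff (m+3) Yp2 from
        PowerSeries.coeff_mul_X_pow Yp2 1 (m+3),
      show PowerSeries.coeff (m+4) (Yp2*X^2) = PowerSeries.coeff (m+2) Yp2 from
        PowerSeries.coeff_mul_X_pow Yp2 2 (m+2),
      show PowerSeries.coeff (m+4) (Yp2*X^3) = PowerSeries.coeff (m+1) Yp2 from
        PowerSeries.coeff_mul_X_pow Yp2 3 (m+1),
      show PowerSeries.coeff (m+4) (Yp1*X^1) = PowerSeries.coeff (m+3) Yp1 from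
        PowerSeries.coeff_mul_X_pow Yp1 1 (m+3),
      show PowerSeries.coeff (m+4) (Yp1*X^2) = PowerSeries.coeff (m+2) Yp1 from
        PowerSeries.coeff_mul_X_pow Yp1 2 (m+2),
      show PowerSeries.coeff (m+4) (Yps*X^1) = PowerSeries.coeff (m+3) Yps from
        PowerSeries.coeff_mul_X_pow Yps 1 (m+3)] at h
    rw [cYp3 (m+2), cYp3 (m+1), cYp3 m, cYp2 (m+3), cYp2 (m+2), cYp2 (m+1),
      cYp1 (m+4), cYp1 (m+3), cYp1 (m+2), cYps (m+4), cYps (m+3)] at h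
    push_cast at h ⊢
    linear_combination (1/32 : ℝ) * h

private lemma key_ind (J : ℕ → ℝ)
    (h1 : J 1 = 3/4 * J 0)
    (hrec : ∀ n : ℕ, ((n:ℝ)+2)^2 * J (n+2)
      = (2*((n:ℝ)+1)^2+2*((n:ℝ)+1)+3/4) * J (n+1) - ((n:ℝ)+1)^2 * J n) :
    ∀ n, J n * (Nat.centralBinom n : ℝ) = J 0 * dd n * 4^n := by
  intro n
  induction n using Nat.twoStepInduction with
  | zero =>
    rw [Nat.centralBinom_zero, dd0]
    norm_num
  | one =>
    rw [show Nat.centralBinom 1 = 2 from rfl, h1, dd1]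
    norm_num
    ring
  | more n ih1 ih2 =>
    have hJ := hrec n
    have hD := dd_rec n
    have hr1' : ((n:ℝ)+1) * (Nat.centralBinom (n+1) : ℝ)
        = 2*(2*(n:ℝ)+1) * (Nat.centralBinom n : ℝ) := by
      have := Nat.succ_mul_centralBinom_succ n
      exact_mod_cast congrArg (Nat.cast : ℕ → ℝ) this
    have hr2' : ((n:ℝ)+2) * (Nat.centralBinom (n+2) : ℝ)
        = 2*(2*(n:ℝ)+3) * (Nat.centralBinom (n+1) : ℝ) := by
      have := Nat.succ_mul_centralBinom_succ (n+1)
      have h := congrArg (Nat.cast : ℕ → ℝ) this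
      push_cast at h
      linarith
    have hpos : (((n:ℝ)+1)*((n:ℝ)+2)^3) ≠ 0 := by positivity
    refine mul_left_cancel₀ hpos ?_
    linear_combination (((n:ℝ)+1)*((n:ℝ)+2)*(Nat.centralBinom (n+2):ℝ)) * hJ
      + (-16*((n:ℝ)+1)*(J 0)*(4:ℝ)^n) * hD
      + (-2*(2*(n:ℝ)+3)*((n:ℝ)+1)^2*(J n)) * hr1'
      + (((n:ℝ)+1)*((2*((n:ℝ)+1)^2+2*((n:ℝ)+1)+3/4) * J (n+1) - ((n:ℝ)+1)^2 * J n)) * hr2'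
      + (-4*(2*(n:ℝ)+3)*(2*(n:ℝ)+1)*((n:ℝ)+1)^2) * ih1
      + (2*(2*(n:ℝ)+3)*(2*((n:ℝ)+1)^2+2*((n:ℝ)+1)+3/4)*((n:ℝ)+1)) * ih2

private lemma fc_pos : ∀ n, 0 < fc n
  | 0 => one_pos
  | (n+1) => by
    have h := fc_pos n
    show 0 < fc n * (((n:ℝ)+1/4) * ((n:ℝ)+3/4)) / ((n:ℝ)+1)^2
    positivity

private lemma fc_le_one : ∀ n, fc n ≤ 1
  | 0 => le_refl 1
  | (n+1) => by
    have h := fc_le_one n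
    have hp := fc_pos n
    show fc n * (((n:ℝ)+1/4) * ((n:ℝ)+3/4)) / ((n:ℝ)+1)^2 ≤ 1
    rw [mul_div_assoc]
    have hn : (0:ℝ) ≤ (n:ℝ) := Nat.cast_nonneg n
    have hr : (((n:ℝ)+1/4) * ((n:ℝ)+3/4)) / ((n:ℝ)+1)^2 ≤ 1 := by
      rw [div_le_one (by positivity)]
      nlinarith
    calc fc n * ((((n:ℝ)+1/4) * ((n:ℝ)+3/4)) / ((n:ℝ)+1)^2) ≤ 1 * 1 :=
      mul_le_mul h hr (by positivity) zero_le_one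
    _ = 1 := by norm_num

private lemma summable_fcx {x : ℝ} (hx : |x| < 1) :
    Summable (fun n : ℕ => ‖fc n * x ^ n‖) := by
  apply Summable.of_nonneg_of_le (fun n => norm_nonneg _) (fun n => ?_)
    (summable_geometric_of_lt_one (abs_nonneg x) hx)
  rw [Real.norm_eq_abs, abs_mul, abs_pow]
  have h1 : |fc n| ≤ 1 := by
    rw [abs_of_pos (fc_pos n)]; exact fc_le_one n
  calc |fc n| * |x| ^ n ≤ 1 * |x| ^ n :=
    mul_le_mul_of_nonneg_right h1 (by positivity)
  _ = |x| ^ n := one_mul _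

private lemma asc_eval_one : ∀ n : ℕ, (ascPochhammer ℝ n).eval (1:ℝ) = n.factorial
  | 0 => by simp
  | (n+1) => by
    rw [ascPochhammer_succ_right, Polynomial.eval_mul, asc_eval_one n]
    simp only [Polynomial.eval_add, Polynomial.eval_X, Polynomial.eval_natCast,
      Nat.factorial_succ]
    push_cast
    ring

private lemma hAB : ∀ n : ℕ, (ascPochhammer ℝ n).eval (1/4 : ℝ)
      * (ascPochhammer ℝ n).eval (3/4 : ℝ) = fc n * ((n.factorial : ℝ))^2
  | 0 => by simp [fc0]
  | (n+1) => by
    rw [ascPochhammer_succ_right, Polynomial.eval_mul, Polynomial.eval_mul]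
    have hind := hAB n
    have hfr := fc_rec n
    simp only [Polynomial.eval_add, Polynomial.eval_X, Polynomial.eval_natCast,
      Nat.factorial_succ]
    push_cast
    nlinarith [hind, hfr]

private lemma cauchy_sq {x : ℝ} (hx : |x| < 1) :
    (∑' n : ℕ, fc n * x ^ n)^2 = ∑' n : ℕ, dd n * x ^ n := by
  have hs := summable_fcx hx
  have h := tsum_mul_tsum_eq_tsum_sum_range_of_summable_norm hs hs
  rw [sq, h]
  apply tsum_congr; intro n
  have : ∀ k ∈ Finset.range (n+1),
      (fc k * x ^ k) * (fc (n-k) * x ^ (n-k)) = (fc k * fc (n-k)) * x ^ n := by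
    intro k hk
    have hk' : k ≤ n := by
      have := Finset.mem_range.mp hk; omega
    have hxp : x ^ k * x ^ (n-k) = x ^ n := by
      rw [← pow_add]
      congr 1
      omega
    calc (fc k * x ^ k) * (fc (n-k) * x ^ (n-k))
        = (fc k * fc (n-k)) * (x ^ k * x ^ (n-k)) := by ring
    _ = (fc k * fc (n-k)) * x ^ n := by rw [hxp]
  rw [Finset.sum_congr rfl this, ← Finset.sum_mul, dd]

private lemma twoF1_eq (x : ℝ) : twoF1 (1/4) (3/4) 1 x = ∑' n : ℕ, fc n * x ^ n := by
  unfold twoF1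
  apply tsum_congr
  intro n
  rw [hAB n, asc_eval_one n]
  have ht : ((n.factorial : ℝ)) * (n.factorial : ℝ) ≠ 0 := by
    have h2 : (0:ℝ) < (n.factorial : ℝ) := by exact_mod_cast n.factorial_pos
    positivity
  rw [sq, mul_div_assoc, div_self ht, mul_one]

/-- **Main Theorem.** Let `0 < a < 1` and let `(Jₙ)` be such that
`∑ |Jₙ| a^{2n} < ∞`, the power series `w(z) = ∑ Jₙ zⁿ` converges for `|z| ≤ a²`,
`w` satisfies the singly confluent Heun equation on a neighborhood of `0`, and
`J₀ = π²/2`.  Then `g(a) = (1/J₀) ∑ (-1)ⁿ (C(2n,n)/4ⁿ) a^{2n} Jₙ = ₂F₁(1/4,3/4;1;-a²)²`. -/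
theorem main_theorem (a : ℝ) (ha0 : 0 < a) (ha1 : a < 1) (J : ℕ → ℝ)
    (habs : Summable (fun n : ℕ => |J n| * a ^ (2 * n)))
    (hconv : ∀ z : ℝ, |z| ≤ a ^ 2 → Summable (fun n : ℕ => J n * z ^ n))
    (w : ℝ → ℝ) (hw : ∀ z : ℝ, |z| ≤ a ^ 2 → w z = ∑' n : ℕ, J n * z ^ n)
    (hode : ∀ᶠ z in nhds (0 : ℝ),
      z * (1 - z) ^ 2 * deriv (deriv w) z
        + (1 - 3 * z) * (1 - z) * deriv w z + (z - 3 / 4) * w z = 0)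
    (hJ0 : J 0 = Real.pi ^ 2 / 2) :
    (1 / J 0) * ∑' n : ℕ,
        (-1 : ℝ) ^ n * ((Nat.choose (2 * n) n : ℝ) / 4 ^ n) * a ^ (2 * n) * J n
      = (twoF1 (1/4) (3/4) 1 (-a ^ 2)) ^ 2 := by
  have hball : ∀ᶠ z in nhds (0:ℝ), |z| ≤ a^2 := by
    have hpos : (0:ℝ) < a^2 := by positivity
    filter_upwards [Metric.ball_mem_nhds (0:ℝ) hpos] with z hz
    rw [Metric.mem_ball, Real.dist_eq, sub_zero] at hz
    exact hz.le
  have hw0 : HasFPowerSeriesAt w (FormalMultilinearSeries.ofScalars ℝ J) 0 := by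
    apply hasFPS_of_hasSum
    filter_upwards [hball] with z hz
    have hsum := (hconv z hz).hasSum
    rwa [← hw z hz] at hsum
  have hrf := rf_zero hw0 hode
  have h1 : J 1 = 3/4 * J 0 := by
    have h := hrf 0
    simp [Rf, sh, cc1, cc2] at h
    linarith
  have hrec : ∀ n : ℕ, ((n:ℝ)+2)^2 * J (n+2)
      = (2*((n:ℝ)+1)^2+2*((n:ℝ)+1)+3/4) * J (n+1) - ((n:ℝ)+1)^2 * J n := by
    intro n
    match n with
    | 0 =>
      have h := hrf 1
      simp [Rf, sh, cc1, cc2] at h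
      push_cast
      linarith
    | 1 =>
      have h := hrf 2
      simp [Rf, sh, cc1, cc2] at h
      push_cast
      linarith
    | (m+2) =>
      have h := hrf (m+3)
      simp only [Rf, sh, cc1, cc2] at h
      push_cast at h ⊢
      linear_combination h
  have key := key_ind J h1 hrec
  have hJ0ne : J 0 ≠ 0 := by
    rw [hJ0]
    have hpi := Real.pi_ne_zero
    positivity
  have hterm : ∀ n : ℕ, (-1:ℝ)^n * ((Nat.choose (2*n) n : ℝ)/4^n) * a^(2*n) * J n
      = J 0 * (dd n * (-a^2)^n) := by
    intro n
    have hk := key n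
    rw [show (Nat.centralBinom n : ℝ) = ((Nat.choose (2*n) n : ℝ)) from by
      rw [Nat.centralBinom_eq_two_mul_choose]] at hk
    rw [neg_pow]
    have h4 : ((4:ℝ))^n ≠ 0 := by positivity
    field_simp
    linear_combination ((-1:ℝ)^n * (a^2)^n) * hk
  have habslt : |(-a^2 : ℝ)| < 1 := by
    rw [abs_neg, abs_of_nonneg (by positivity : (0:ℝ) ≤ a^2)]
    nlinarith
  calc (1 / J 0) * ∑' n : ℕ,
        (-1 : ℝ) ^ n * ((Nat.choose (2 * n) n : ℝ) / 4 ^ n) * a ^ (2 * n) * J n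
      = (1 / J 0) * ∑' n : ℕ, J 0 * (dd n * (-a^2)^n) := by rw [tsum_congr hterm]
    _ = (1 / J 0) * (J 0 * ∑' n : ℕ, dd n * (-a^2)^n) := by rw [tsum_mul_left]
    _ = ∑' n : ℕ, dd n * (-a^2)^n := by
        rw [← mul_assoc, one_div, inv_mul_cancel₀ hJ0ne, one_mul]
    _ = (∑' n : ℕ, fc n * (-a^2)^n)^2 := (cauchy_sq habslt).symm
    _ = (twoF1 (1/4) (3/4) 1 (-a ^ 2)) ^ 2 := by rw [twoF1_eq]
end

section
/- For every a with 0 < a < 1, ₂F₁(1/4, 3/4; 1; -a²) = (1/(2π)) · ∫₀^{2π} (1 + i·a·cos θ)^{-1/2} dθ, where the left-hand side is regarded as a complex number and (1 + i·a·cos θ)^{-1/2} denotes the principal branch of the complex power (the argument 1 + i·a·cos θ never lies on the nonpositive real axis). -/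
open Complex

namespace Stmt17

lemma ascPochhammer_eval_succ (x : ℝ) (n : ℕ) :
    (ascPochhammer ℝ (n+1)).eval x = (ascPochhammer ℝ n).eval x * (x + n) := by
  simp [ascPochhammer_succ_right, Polynomial.eval_mul]

/-- `γ n = (1/2)ₙ / n!`. -/
noncomputable def γ (n : ℕ) : ℝ := (ascPochhammer ℝ n).eval (1/2) / n.factorial

lemma γ_zero : γ 0 = 1 := by simp [γ]

lemma γ_succ (n : ℕ) : γ (n+1) = γ n * ((1/2 + n) / (n+1)) := by
  have h : ((n+1).factorial : ℝ) = (n.factorial : ℝ) * (n+1) := by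
    rw [Nat.factorial_succ]; push_cast; ring
  rw [γ, γ, ascPochhammer_eval_succ, h, div_mul_div_comm]

lemma γ_pos (n : ℕ) : 0 < γ n := by
  induction n with
  | zero => simp [γ_zero]
  | succ n ih =>
    rw [γ_succ]
    have : (0:ℝ) < (1/2 + n) / (n+1) := by positivity
    positivity

lemma γ_le_one (n : ℕ) : γ n ≤ 1 := by
  induction n with
  | zero => simp [γ_zero]
  | succ n ih =>
    rw [γ_succ]
    have h1 : (1/2 + (n:ℝ)) / (n+1) ≤ 1 := by
      rw [div_le_one (by positivity)]; linarith
    have := γ_pos n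
    calc γ n * ((1/2 + (n:ℝ))/(n+1)) ≤ 1 * 1 := by
          apply mul_le_mul ih h1 (by positivity) zero_le_one
      _ = 1 := by ring

/-- The binomial coefficients `binom(-1/2, n)` as complex numbers. -/
noncomputable def c (n : ℕ) : ℂ := (-1)^n * (γ n : ℂ)

lemma c_zero : c 0 = 1 := by simp [c, γ_zero]

lemma norm_c (n : ℕ) : ‖c n‖ = γ n := by
  rw [c, norm_mul, norm_pow, norm_neg, norm_one, one_pow, one_mul, Complex.norm_real,
    Real.norm_eq_abs, abs_of_pos (γ_pos n)]

lemma c_rec (n : ℕ) : ((n:ℂ)+1) * c (n+1) = -(1/2 + n) * c n := by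
  rw [c, c, γ_succ]
  push_cast
  have h2 : ((n : ℂ) + 1) ≠ 0 := by
    exact_mod_cast Nat.cast_add_one_ne_zero (R := ℂ) n
  field_simp
  ring

lemma tendsto_ratio : Filter.Tendsto (fun n : ℕ ↦ ‖c (n+1)‖ / ‖c n‖)
    Filter.atTop (nhds 1) := by
  have heq : ∀ n : ℕ, ‖c (n+1)‖ / ‖c n‖ = 1 - (1/2) / ((n:ℝ)+1) := by
    intro n
    rw [norm_c, norm_c, γ_succ, mul_comm, mul_div_assoc, div_self (γ_pos n).ne', mul_one]
    field_simp
    ring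
  simp_rw [heq]
  have : Filter.Tendsto (fun n : ℕ ↦ (1/2) / ((n:ℝ)+1)) Filter.atTop (nhds 0) := by
    apply Filter.Tendsto.div_atTop tendsto_const_nhds
    exact Filter.tendsto_atTop_add_const_right _ _ tendsto_natCast_atTop_atTop
  simpa using tendsto_const_nhds.sub this

/-- The formal power series `∑ binom(-1/2,n) zⁿ`. -/
noncomputable def p : FormalMultilinearSeries ℂ ℂ ℂ := FormalMultilinearSeries.ofScalars ℂ c

lemma p_radius : p.radius = 1 := by
  have h := FormalMultilinearSeries.ofScalars_radius_eq_inv_of_tendsto ℂ c (r := 1)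
    one_ne_zero (by simpa using tendsto_ratio)
  simpa [p] using h

/-- The sum of the binomial series. -/
noncomputable def f : ℂ → ℂ := p.sum

lemma hp : HasFPowerSeriesOnBall f p 0 1 := by
  have := p.hasFPowerSeriesOnBall (by rw [p_radius]; norm_num)
  rwa [p_radius] at this

lemma mem_ball {z : ℂ} (hz : ‖z‖ < 1) : z ∈ Metric.eball (0:ℂ) 1 := by
  rw [EMetric.mem_ball, edist_zero_right, enorm_eq_nnnorm, ← ENNReal.coe_one, ENNReal.coe_lt_coe,
    ← NNReal.coe_lt_coe]
  exact_mod_cast hz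

lemma hasSum_f {z : ℂ} (hz : ‖z‖ < 1) : HasSum (fun n ↦ c n * z^n) (f z) := by
  have h := hp.hasSum (mem_ball hz)
  simp only [zero_add] at h
  convert h using 2 with n
  · rfl
  rw [p, FormalMultilinearSeries.ofScalars_apply_eq, smul_eq_mul]


lemma hasSum_deriv {z : ℂ} (hz : ‖z‖ < 1) :
    HasSum (fun n : ℕ ↦ ((n:ℂ)+1) * c (n+1) * z^(n+1)) (z * deriv f z) := by
  have hd := hp.fderiv.hasSum (mem_ball hz)
  simp only [zero_add] at hd
  have h2 := hd.mapL (ContinuousLinearMap.apply ℂ ℂ z)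
  have hterm : ∀ n : ℕ, (ContinuousLinearMap.apply ℂ ℂ z) ((p.derivSeries n) fun _ ↦ z)
      = ((n:ℂ)+1) * c (n+1) * z^(n+1) := by
    intro n
    rw [ContinuousLinearMap.apply_apply, FormalMultilinearSeries.derivSeries_apply_diag]
    rw [p, FormalMultilinearSeries.ofScalars_apply_eq, nsmul_eq_mul]
    push_cast
    rw [smul_eq_mul]
    ring
  have hval : (ContinuousLinearMap.apply ℂ ℂ z) (fderiv ℂ f z) = z * deriv f z := by
    rw [ContinuousLinearMap.apply_apply]
    calc (fderiv ℂ f z) z = (fderiv ℂ f z) (z • 1) := by rw [smul_eq_mul, mul_one]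
      _ = z • (fderiv ℂ f z 1) := (fderiv ℂ f z).map_smul z 1
      _ = z * deriv f z := by rw [fderiv_apply_one_eq_deriv, smul_eq_mul]
  rw [← hval]
  exact h2.congr_fun fun n ↦ (hterm n).symm

lemma f_zero : f 0 = 1 := by
  have h := hasSum_f (z := 0) (by norm_num)
  have h2 : HasSum (fun n ↦ c n * (0:ℂ)^n) (c 0) := by
    have := hasSum_single (f := fun n ↦ c n * (0:ℂ)^n) 0
      (fun b hb ↦ by simp [zero_pow hb])
    simpa using this
  rw [← c_zero, h.unique h2]

lemma key_ode {z : ℂ} (hz : ‖z‖ < 1) : (1+z) * deriv f z = -(1/2) * f z := by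
  by_cases hz0 : z = 0
  · subst hz0
    have hderiv : deriv f 0 = c 1 := by
      have := hp.hasFPowerSeriesAt.deriv
      rw [this, p, FormalMultilinearSeries.ofScalars_apply_eq]
      simp
    rw [hderiv, f_zero, c]
    simp [γ_succ, γ_zero]
  · have h1 := hasSum_deriv hz
    have h2 := hasSum_f hz
    have h3 : HasSum (fun n : ℕ ↦ (n:ℂ) * c n * z^(n+1)) (z * (z * deriv f z)) := by
      refine (hasSum_nat_add_iff' (f := fun n : ℕ ↦ (n:ℂ) * c n * z^(n+1)) 1).mp ?_
      simp only [Finset.range_one, Finset.sum_singleton, Nat.cast_zero, zero_mul,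
        sub_zero]
      have h := h1.mul_left z
      refine h.congr_fun fun n ↦ ?_
      push_cast
      ring
    have h4 := h1.add h3
    have h5 := h2.mul_left (-(1/2) * z)
    have heq : (fun n : ℕ ↦ ((n:ℂ)+1) * c (n+1) * z^(n+1) + (n:ℂ) * c n * z^(n+1))
        = fun n : ℕ ↦ -(1/2) * z * (c n * z^n) := by
      funext n
      have hrec := c_rec n
      calc ((n:ℂ)+1) * c (n+1) * z^(n+1) + (n:ℂ) * c n * z^(n+1)
          = (((n:ℂ)+1) * c (n+1) + (n:ℂ) * c n) * z^(n+1) := by ring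
        _ = (-(1/2 + (n:ℂ)) * c n + (n:ℂ) * c n) * z^(n+1) := by rw [hrec]
        _ = -(1/2) * z * (c n * z^n) := by rw [pow_succ]; ring
    rw [heq] at h4
    have huniq := h4.unique h5
    have : z * ((1 + z) * deriv f z) = z * (-(1/2) * f z) := by
      linear_combination huniq
    exact mul_left_cancel₀ hz0 this

lemma slit {w : ℂ} (hw : ‖w‖ < 1) : (1 + w) ∈ Complex.slitPlane := by
  rw [Complex.mem_slitPlane_iff]
  left
  have : |w.re| ≤ ‖w‖ := Complex.abs_re_le_norm w
  simp only [Complex.add_re, Complex.one_re]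
  have : -‖w‖ ≤ w.re := by
    have := abs_le.mp this
    linarith [this.1]
  linarith

lemma one_add_ne {w : ℂ} (hw : ‖w‖ < 1) : (1 + w) ≠ 0 :=
  Complex.slitPlane_ne_zero (slit hw)

lemma f_eq_cpow {z : ℂ} (hz : ‖z‖ < 1) : f z = (1 + z) ^ (-(1/2) : ℂ) := by
  set Φ : ℂ → ℂ := fun u ↦ f (u*z) * (1 + u*z) ^ ((1/2) : ℂ) with hΦdef
  have hΦ : ∀ u : ℂ, ‖u * z‖ < 1 → HasDerivAt Φ 0 u := by
    intro u hw
    set w := u * z with hwdef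
    have hslit := slit hw
    have hne := one_add_ne hw
    have hf_diff : HasDerivAt f (deriv f w) w := by
      have hd : DifferentiableOn ℂ f (Metric.eball 0 1) := hp.differentiableOn
      exact (hd.differentiableAt (EMetric.isOpen_ball.mem_nhds (mem_ball hw))).hasDerivAt
    have hinner : HasDerivAt (fun u : ℂ ↦ u * z) z u := hasDerivAt_mul_const z
    have hcomp : HasDerivAt (fun u : ℂ ↦ f (u*z)) (deriv f w * z) u :=
      HasDerivAt.comp u hf_diff hinner
    have hinner2 : HasDerivAt (fun u : ℂ ↦ 1 + u*z) z u := (hasDerivAt_mul_const z).const_add 1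
    have hcpow : HasDerivAt (fun u : ℂ ↦ (1 + u*z) ^ ((1/2):ℂ))
        (((1/2):ℂ) * (1 + w) ^ (((1/2):ℂ) - 1) * z) u := hinner2.cpow_const hslit
    have hmul := hcomp.mul hcpow
    have hzero : deriv f w * z * (1 + w) ^ ((1/2):ℂ)
        + f w * (((1/2):ℂ) * (1 + w) ^ (((1/2):ℂ) - 1) * z) = 0 := by
      have hode := key_ode hw
      have hsplit : (1 + w) ^ ((1/2):ℂ) = (1 + w) * (1 + w) ^ (((1/2):ℂ) - 1) := by
        conv_lhs => rw [show ((1/2):ℂ) = 1 + (((1/2):ℂ) - 1) by ring,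
          Complex.cpow_add _ _ hne, Complex.cpow_one]
      rw [hsplit]
      linear_combination (z * (1 + w) ^ (((1/2):ℂ) - 1)) * hode
    rw [hzero] at hmul
    exact hmul
  -- constancy on [0,1]
  have hmem : ∀ s : ℝ, s ∈ Set.Icc (0:ℝ) 1 → ‖(s:ℂ) * z‖ < 1 := by
    intro s hs
    rw [norm_mul, Complex.norm_real, Real.norm_eq_abs, _root_.abs_of_nonneg hs.1]
    calc s * ‖z‖ ≤ 1 * ‖z‖ := by
          apply mul_le_mul_of_nonneg_right hs.2 (norm_nonneg z)
      _ < 1 := by rwa [one_mul]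
  have hF : ∀ s : ℝ, s ∈ Set.Icc (0:ℝ) 1 → HasDerivAt (fun s : ℝ ↦ Φ s) 0 s := by
    intro s hs
    exact (hΦ s (hmem s hs)).comp_ofReal
  have hconst := constant_of_derivWithin_zero (f := fun s : ℝ ↦ Φ s) (a := 0) (b := 1)
    (fun s hs ↦ ((hF s hs).differentiableAt).differentiableWithinAt)
    (fun s hs ↦ by
      have := (hF s (Set.mem_Icc_of_Ico hs)).hasDerivWithinAt (s := Set.Icc (0:ℝ) 1)
      exact this.derivWithin (uniqueDiffOn_Icc one_pos s (Set.mem_Icc_of_Ico hs)))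
  have h10 := hconst 1 (by norm_num)
  have hΦ0 : Φ 0 = 1 := by
    simp only [hΦdef, zero_mul, add_zero, f_zero, Complex.one_cpow, one_mul]
  have hΦ1 : Φ 1 = f z * (1 + z) ^ ((1/2):ℂ) := by simp [hΦdef]
  simp only [Complex.ofReal_one, Complex.ofReal_zero] at h10
  rw [hΦ1, hΦ0] at h10
  -- conclude
  have hne := one_add_ne hz
  have hcne : (1 + z) ^ ((1/2):ℂ) ≠ 0 := by
    simp [Complex.cpow_eq_zero_iff, hne]
  rw [Complex.cpow_neg]
  field_simp at h10 ⊢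
  linear_combination h10

theorem hasSum_binomial {z : ℂ} (hz : ‖z‖ < 1) :
    HasSum (fun n ↦ c n * z^n) ((1 + z) ^ (-(1/2) : ℂ)) := by
  rw [← f_eq_cpow hz]; exact hasSum_f hz


open Real in
lemma sin_pow_two_pi (n : ℕ) (e : ℝ) (he : ∀ x : ℝ, (-x)^n = e * x^n) :
    ∫ θ in (0:ℝ)..(2*π), Real.sin θ ^ n = (1 + e) * ∫ θ in (0:ℝ)..π, Real.sin θ ^ n := by
  have hi : ∀ a b : ℝ, IntervalIntegrable (fun θ ↦ Real.sin θ ^ n) MeasureTheory.volume a b :=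
    fun a b ↦ (Real.continuous_sin.pow n).intervalIntegrable a b
  have hsplit := intervalIntegral.integral_add_adjacent_intervals (a := (0:ℝ)) (b := π)
    (c := 2*π) (hi 0 π) (hi π (2*π))
  have hshift : (∫ θ in π..(2*π), Real.sin θ ^ n)
      = e * ∫ θ in (0:ℝ)..π, Real.sin θ ^ n := by
    have h1 : (∫ θ in (0:ℝ)..π, Real.sin (θ + π) ^ n)
        = ∫ θ in (0+π)..(π+π), Real.sin θ ^ n :=
      intervalIntegral.integral_comp_add_right (fun θ ↦ Real.sin θ ^ n) π
    rw [zero_add, show π + π = 2*π by ring] at h1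
    rw [← h1]
    simp_rw [Real.sin_add_pi, he]
    rw [intervalIntegral.integral_const_mul]
  rw [← hsplit, hshift]
  ring

open Real in
lemma cos_pow_eq_sin_pow (n : ℕ) :
    ∫ θ in (0:ℝ)..(2*π), Real.cos θ ^ n = ∫ θ in (0:ℝ)..(2*π), Real.sin θ ^ n := by
  have h1 : (∫ θ in (0:ℝ)..(2*π), Real.cos θ ^ n)
      = ∫ θ in (0:ℝ)..(2*π), Real.sin (θ + π/2) ^ n := by
    simp_rw [Real.sin_add_pi_div_two]
  have h2 : (∫ θ in (0:ℝ)..(2*π), Real.sin (θ + π/2) ^ n)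
      = ∫ θ in (π/2)..(2*π + π/2), Real.sin θ ^ n := by
    have := intervalIntegral.integral_comp_add_right (a := (0:ℝ)) (b := 2*π)
      (fun θ ↦ Real.sin θ ^ n) (π/2)
    rwa [zero_add] at this
  have hper : Function.Periodic (fun θ ↦ Real.sin θ ^ n) (2*π) := fun x ↦ by
    simp [Real.sin_periodic x]
  have h3 := hper.intervalIntegral_add_eq (π/2) 0
  rw [zero_add] at h3
  rw [h1, h2, show 2*π + π/2 = π/2 + 2*π by ring, h3]

open Real in
lemma J_odd (m : ℕ) : ∫ θ in (0:ℝ)..(2*π), Real.cos θ ^ (2*m+1) = 0 := by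
  rw [cos_pow_eq_sin_pow,
    sin_pow_two_pi _ (-1) (fun x ↦ by rw [Odd.neg_pow ⟨m, by ring⟩]; ring)]
  ring

open Real in
lemma J_even (m : ℕ) : ∫ θ in (0:ℝ)..(2*π), Real.cos θ ^ (2*m)
    = 2 * π * ∏ i ∈ Finset.range m, (2*(i:ℝ)+1)/(2*i+2) := by
  rw [cos_pow_eq_sin_pow,
    sin_pow_two_pi _ 1 (fun x ↦ by rw [Even.neg_pow ⟨m, by ring⟩]; ring),
    integral_sin_pow_even]
  ring


lemma eval_one_asc (m : ℕ) : (ascPochhammer ℝ m).eval 1 = m.factorial := by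
  induction m with
  | zero => simp
  | succ m ih =>
    rw [ascPochhammer_eval_succ, ih, Nat.factorial_succ]
    push_cast
    ring

lemma asc_half_double (m : ℕ) : (ascPochhammer ℝ (2*m)).eval (1/2)
    = 4^m * (ascPochhammer ℝ m).eval (1/4) * (ascPochhammer ℝ m).eval (3/4) := by
  induction m with
  | zero => simp
  | succ m ih =>
    have h2 : 2*(m+1) = (2*m+1)+1 := by ring
    rw [h2, ascPochhammer_eval_succ, ascPochhammer_eval_succ,
      ascPochhammer_eval_succ, ascPochhammer_eval_succ, ih]
    push_cast
    ring

lemma W_val (m : ℕ) : ∏ i ∈ Finset.range m, (2*(i:ℝ)+1)/(2*i+2)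
    = (2*m).factorial / (4^m * m.factorial * m.factorial) := by
  induction m with
  | zero => simp
  | succ m ih =>
    rw [Finset.prod_range_succ, ih]
    have h2 : 2*(m+1) = (2*m+1)+1 := by ring
    rw [h2, Nat.factorial_succ, Nat.factorial_succ, Nat.factorial_succ]
    have hm : ((m.factorial : ℝ)) ≠ 0 := Nat.cast_ne_zero.mpr m.factorial_ne_zero
    have h2m : (((2*m).factorial : ℝ)) ≠ 0 := Nat.cast_ne_zero.mpr (2*m).factorial_ne_zero
    have h4 : (4:ℝ)^m ≠ 0 := by positivity
    have hne1 : (2*(m:ℝ)+2) ≠ 0 := by positivity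
    push_cast
    field_simp
    ring

lemma coeff_id (m : ℕ) : γ (2*m) * ∏ i ∈ Finset.range m, (2*(i:ℝ)+1)/(2*i+2)
    = ((ascPochhammer ℝ m).eval (1/4) * (ascPochhammer ℝ m).eval (3/4))
      / ((ascPochhammer ℝ m).eval 1 * m.factorial) := by
  rw [γ, W_val, asc_half_double, eval_one_asc]
  have hm : ((m.factorial : ℝ)) ≠ 0 := Nat.cast_ne_zero.mpr m.factorial_ne_zero
  have h2m : (((2*m).factorial : ℝ)) ≠ 0 := Nat.cast_ne_zero.mpr (2*m).factorial_ne_zero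
  have h4 : (4:ℝ)^m ≠ 0 := by positivity
  field_simp

lemma W_nonneg (m : ℕ) : 0 ≤ ∏ i ∈ Finset.range m, (2*(i:ℝ)+1)/(2*i+2) :=
  Finset.prod_nonneg fun i _ ↦ by positivity

lemma W_le_one (m : ℕ) : ∏ i ∈ Finset.range m, (2*(i:ℝ)+1)/(2*i+2) ≤ 1 :=
  Finset.prod_le_one (fun i _ ↦ by positivity)
    (fun i _ ↦ by rw [div_le_one (by positivity)]; linarith)

lemma q_mem (m : ℕ) :
    0 ≤ ((ascPochhammer ℝ m).eval (1/4) * (ascPochhammer ℝ m).eval (3/4))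
      / ((ascPochhammer ℝ m).eval 1 * m.factorial)
    ∧ ((ascPochhammer ℝ m).eval (1/4) * (ascPochhammer ℝ m).eval (3/4))
      / ((ascPochhammer ℝ m).eval 1 * m.factorial) ≤ 1 := by
  rw [← coeff_id]
  constructor
  · exact mul_nonneg (γ_pos _).le (W_nonneg m)
  · calc γ (2*m) * ∏ i ∈ Finset.range m, (2*(i:ℝ)+1)/(2*i+2) ≤ 1 * 1 :=
        mul_le_mul (γ_le_one _) (W_le_one m) (W_nonneg m) zero_le_one
      _ = 1 := by ring

end Stmt17

set_option maxHeartbeats 1600000 in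
open Stmt17 MeasureTheory in
/-- For `0 < a < 1`,
`₂F₁(1/4,3/4;1;-a²) = (1/(2π)) ∫₀^{2π} (1 + i a cos θ)^{-1/2} dθ`
as complex numbers, with the principal branch of the complex power. -/
theorem twoF1_eq_complex_integral (a : ℝ) (ha0 : 0 < a) (ha1 : a < 1) :
    (twoF1 (1/4) (3/4) 1 (-a ^ 2) : ℂ)
      = (1 / (2 * Real.pi) : ℂ) *
          ∫ θ in (0:ℝ)..(2 * Real.pi),
            (1 + Complex.I * (a : ℂ) * (Real.cos θ : ℂ)) ^ (-(1/2) : ℂ) := by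
  have pi_pos := Real.pi_pos
  set μ := volume.restrict (Set.Ioc (0:ℝ) (2*Real.pi)) with hμ
  set F : ℕ → ℝ → ℂ := fun n θ ↦ Stmt17.c n * (Complex.I * a * Real.cos θ)^n with hF
  -- norms
  have hz : ∀ θ : ℝ, ‖Complex.I * (a:ℂ) * (Real.cos θ : ℂ)‖ < 1 := by
    intro θ
    rw [norm_mul, norm_mul, Complex.norm_I, one_mul, Complex.norm_real, Complex.norm_real,
      Real.norm_eq_abs, Real.norm_eq_abs, abs_of_pos ha0]
    calc a * |Real.cos θ| ≤ a * 1 :=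
          mul_le_mul_of_nonneg_left (Real.abs_cos_le_one θ) ha0.le
      _ < 1 := by rwa [mul_one]
  have h_cont : ∀ n, Continuous (F n) := by
    intro n
    exact continuous_const.mul
      ((continuous_const.mul (Complex.continuous_ofReal.comp Real.continuous_cos)).pow n)
  have h_int : ∀ n, Integrable (F n) μ := fun n ↦ (h_cont n).integrableOn_Ioc
  have h_norm : ∀ n θ, ‖F n θ‖ ≤ a^n := by
    intro n θ
    rw [hF]
    simp only
    rw [norm_mul, norm_pow, norm_c]
    calc γ n * ‖Complex.I * (a:ℂ) * (Real.cos θ:ℂ)‖^n ≤ 1 * a^n := by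
          apply mul_le_mul (γ_le_one n) _ (by positivity) zero_le_one
          apply pow_le_pow_left₀ (norm_nonneg _) _ n
          rw [norm_mul, norm_mul, Complex.norm_I, one_mul, Complex.norm_real,
            Complex.norm_real, Real.norm_eq_abs, Real.norm_eq_abs, abs_of_pos ha0]
          calc a * |Real.cos θ| ≤ a * 1 :=
                mul_le_mul_of_nonneg_left (Real.abs_cos_le_one θ) ha0.le
            _ = a := mul_one a
      _ = a^n := one_mul _
  have hμuniv : (μ Set.univ).toReal = 2*Real.pi := by
    rw [hμ, Measure.restrict_apply_univ, Real.volume_Ioc, ENNReal.toReal_ofReal (by linarith)]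
    ring
  have h_sum : Summable (fun n ↦ ∫ θ, ‖F n θ‖ ∂μ) := by
    apply Summable.of_nonneg_of_le
      (fun n ↦ integral_nonneg (fun θ ↦ norm_nonneg _))
      (fun n ↦ ?_) ((summable_geometric_of_lt_one ha0.le ha1).mul_left (2*Real.pi))
    calc ∫ θ, ‖F n θ‖ ∂μ ≤ ∫ _, a^n ∂μ :=
          integral_mono (h_int n).norm (integrable_const _) (h_norm n)
      _ = 2*Real.pi * a^n := by rw [integral_const, measureReal_def, hμuniv, smul_eq_mul]
  have hS := hasSum_integral_of_summable_integral_norm h_int h_sum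
  -- pointwise sums
  have h_tsum : ∀ θ : ℝ, ∑' n, F n θ
      = (1 + Complex.I * (a:ℂ) * (Real.cos θ:ℂ)) ^ (-(1/2) : ℂ) :=
    fun θ ↦ (Stmt17.hasSum_binomial (hz θ)).tsum_eq
  -- term values
  have h_term : ∀ n, (∫ θ, F n θ ∂μ)
      = Stmt17.c n * (Complex.I * a)^n
          * ((∫ θ in (0:ℝ)..(2*Real.pi), Real.cos θ^n : ℝ) : ℂ) := by
    intro n
    have h1 : (∫ θ, F n θ ∂μ) = ∫ θ in (0:ℝ)..(2*Real.pi), F n θ :=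
      (intervalIntegral.integral_of_le (by linarith)).symm
    rw [h1, hF]
    simp only
    have h2 : ∀ θ : ℝ, Stmt17.c n * (Complex.I * a * Real.cos θ)^n
        = (Stmt17.c n * (Complex.I * a)^n) * ((Real.cos θ ^ n : ℝ) : ℂ) := by
      intro θ
      push_cast
      ring
    simp_rw [h2]
    rw [intervalIntegral.integral_const_mul, intervalIntegral.integral_ofReal]
  -- the real series
  set r : ℕ → ℝ := fun m ↦ ((ascPochhammer ℝ m).eval (1/4) * (ascPochhammer ℝ m).eval (3/4)) /
    ((ascPochhammer ℝ m).eval 1 * (m.factorial : ℝ)) * (-a^2) ^ m with hr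
  have hr_sum : Summable r := by
    apply Summable.of_abs
    apply Summable.of_nonneg_of_le (fun m ↦ abs_nonneg _) (fun m ↦ ?_)
      (summable_geometric_of_lt_one (by positivity) (by nlinarith : a^2 < 1))
    rw [hr]
    simp only
    rw [abs_mul, _root_.abs_pow, abs_neg, _root_.abs_of_nonneg (sq_nonneg a),
      _root_.abs_of_nonneg (q_mem m).1]
    calc _ ≤ 1 * (a^2)^m := by
          apply mul_le_mul_of_nonneg_right (q_mem m).2 (by positivity)
      _ = (a^2)^m := one_mul _
  have htwoF1 : HasSum r (twoF1 (1/4) (3/4) 1 (-a^2)) := by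
    rw [twoF1]
    exact hr_sum.hasSum
  -- even terms
  have h_even_term : ∀ m : ℕ, (∫ θ, F (2*m) θ ∂μ) = (2*Real.pi : ℂ) * ((r m : ℝ) : ℂ) := by
    intro m
    rw [h_term, J_even]
    have hc2m : Stmt17.c (2*m) = ((γ (2*m) : ℝ) : ℂ) := by
      rw [Stmt17.c, pow_mul]
      norm_num
    have hIa : (Complex.I * a)^(2*m) = (((-a^2 : ℝ)) : ℂ)^m := by
      rw [pow_mul]
      congr 1
      rw [mul_pow, Complex.I_sq]
      push_cast
      ring
    rw [hc2m, hIa]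
    have hreal : γ (2*m) * (-a^2)^m
          * (2*Real.pi * ∏ i ∈ Finset.range m, (2*(i:ℝ)+1)/(2*i+2))
        = 2*Real.pi * r m := by
      rw [hr]
      simp only
      rw [← coeff_id m]
      ring
    calc ((γ (2*m) : ℝ) : ℂ) * (((-a^2 : ℝ)) : ℂ)^m
          * ((2*Real.pi * ∏ i ∈ Finset.range m, (2*(i:ℝ)+1)/(2*i+2) : ℝ) : ℂ)
        = ((γ (2*m) * (-a^2)^m
            * (2*Real.pi * ∏ i ∈ Finset.range m, (2*(i:ℝ)+1)/(2*i+2)) : ℝ) : ℂ) := by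
          push_cast; ring
      _ = ((2*Real.pi * r m : ℝ) : ℂ) := by rw [hreal]
      _ = (2*Real.pi : ℂ) * ((r m : ℝ) : ℂ) := by push_cast; ring
  have heven : HasSum (fun m ↦ ∫ θ, F (2*m) θ ∂μ)
      ((2*Real.pi : ℂ) * (twoF1 (1/4) (3/4) 1 (-a^2) : ℂ)) := by
    have h := (htwoF1.mapL Complex.ofRealCLM).mul_left (2*Real.pi : ℂ)
    simp only [Complex.ofRealCLM_apply] at h
    exact h.congr_fun fun m ↦ h_even_term m
  have hodd : HasSum (fun m ↦ ∫ θ, F (2*m+1) θ ∂μ) 0 := by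
    have : ∀ m : ℕ, (∫ θ, F (2*m+1) θ ∂μ) = 0 := by
      intro m
      rw [h_term, J_odd]
      simp
    have h0 : HasSum (fun _ : ℕ ↦ (0:ℂ)) 0 := hasSum_zero
    exact h0.congr_fun fun m ↦ this m
  have hcomb := HasSum.even_add_odd (f := fun n ↦ ∫ θ, F n θ ∂μ) heven hodd
  rw [add_zero] at hcomb
  have hI : (∫ θ, ∑' n, F n θ ∂μ) = (2*Real.pi : ℂ) * (twoF1 (1/4) (3/4) 1 (-a^2) : ℂ) :=
    hS.unique hcomb
  have hI2 : (∫ θ in (0:ℝ)..(2*Real.pi),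
      (1 + Complex.I * (a:ℂ) * (Real.cos θ:ℂ)) ^ (-(1/2) : ℂ))
      = (2*Real.pi : ℂ) * (twoF1 (1/4) (3/4) 1 (-a^2) : ℂ) := by
    rw [intervalIntegral.integral_of_le (by linarith)]
    rw [← hI]
    exact setIntegral_congr_fun measurableSet_Ioc (fun θ _ ↦ (h_tsum θ).symm)
  rw [hI2]
  have h2π : (2*Real.pi : ℂ) ≠ 0 := by
    simp [Real.pi_ne_zero]
  field_simp
end
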